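/- arXiv:math/0311191 — 8 statements merged into one kernel-verified Lean document; each statement's English description precedes it below -/
import Mathlib

section
/- A univariate polynomial with real coefficients having exactly m nonzero terms has at most m−1 positive real roots (counted without multiplicity). -/
open Polynomial in
private lemma descartes_key : ∀ m, 1 ≤ m → ∀ (c : Fin m → ℝ) (a : Fin m → ℕ),
    (∀ i, c i ≠ 0) → Function.Injective a →
    {x : ℝ | 0 < x ∧ ∑ i, c i * x ^ (a i) = 0}.Finite ∧
    {x : ℝ | 0 < x ∧ ∑ i, c i * x ^ (a i) = 0}.ncard ≤ m - 1 := by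
  intro m hm
  induction m, hm using Nat.le_induction with
  | base =>
    intro c a hc _
    have h : {x : ℝ | 0 < x ∧ ∑ i, c i * x ^ (a i) = 0} = ∅ := by
      ext x
      simp only [Set.mem_setOf_eq, Set.mem_empty_iff_false, iff_false, not_and]
      intro hx
      rw [Fin.sum_univ_one]
      exact mul_ne_zero (hc 0) (pow_ne_zero _ hx.ne')
    rw [h]
    exact ⟨Set.finite_empty, by simp⟩
  | succ m hm IH =>
    intro c a hc ha
    obtain ⟨j, hj⟩ := Finite.exists_min a
    set b : Fin (m + 1) → ℕ := fun i => a i - a j with hbdef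
    have hab : ∀ i, a i = a j + b i := fun i => (Nat.add_sub_cancel' (hj i)).symm
    have hbj : b j = 0 := by simp [hbdef]
    have hbpos : ∀ i, i ≠ j → 0 < b i := by
      intro i hij
      have : a j < a i := lt_of_le_of_ne (hj i) fun h => hij (ha h.symm)
      exact Nat.sub_pos_of_lt this
    have hbinj : Function.Injective b := by
      intro i i' h
      apply ha
      rw [hab i, hab i', h]
    -- set equality: divide by x ^ (a j)
    have hSeq : {x : ℝ | 0 < x ∧ ∑ i, c i * x ^ (a i) = 0}
        = {x : ℝ | 0 < x ∧ ∑ i, c i * x ^ (b i) = 0} := by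
      ext x
      simp only [Set.mem_setOf_eq, and_congr_right_iff]
      intro hx
      have step : ∀ i : Fin (m + 1), c i * x ^ (a i) = x ^ (a j) * (c i * x ^ (b i)) := by
        intro i; rw [hab i, pow_add]; ring
      rw [Finset.sum_congr rfl fun i _ => step i, ← Finset.mul_sum,
        mul_eq_zero]
      have hxp : x ^ (a j) ≠ 0 := pow_ne_zero _ hx.ne'
      tauto
    set p : ℝ[X] := ∑ i, C (c i) * X ^ (b i) with hpdef
    have hpeval : ∀ x : ℝ, p.eval x = ∑ i, c i * x ^ (b i) := by
      intro x; simp [hpdef, eval_finset_sum]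
    have hp0 : p.coeff 0 = c j := by
      rw [hpdef, finset_sum_coeff, Finset.sum_eq_single j]
      · simp [hbj]
      · intro i _ hij
        rw [coeff_C_mul, coeff_X_pow, if_neg (by exact (hbpos i hij).ne), mul_zero]
      · simp
    have hp : p ≠ 0 := fun h => hc j (by rw [← hp0, h, coeff_zero])
    have hfin : {x : ℝ | 0 < x ∧ ∑ i, c i * x ^ (b i) = 0}.Finite := by
      apply (Polynomial.finite_setOf_isRoot hp).subset
      intro x hx
      simp only [Set.mem_setOf_eq] at hx ⊢
      rw [IsRoot, hpeval]
      exact hx.2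
    -- derivative data
    set c' : Fin m → ℝ := fun k => c (j.succAbove k) * (b (j.succAbove k) : ℝ) with hc'def
    set a' : Fin m → ℕ := fun k => b (j.succAbove k) - 1 with ha'def
    have hc' : ∀ k, c' k ≠ 0 := by
      intro k
      exact mul_ne_zero (hc _) (Nat.cast_ne_zero.2 (hbpos _ (Fin.succAbove_ne j k)).ne')
    have ha' : Function.Injective a' := by
      intro k k' h
      have h1 : 0 < b (j.succAbove k) := hbpos _ (Fin.succAbove_ne j k)
      have h2 : 0 < b (j.succAbove k') := hbpos _ (Fin.succAbove_ne j k')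
      have : b (j.succAbove k) = b (j.succAbove k') := by
        simp only [ha'def] at h; omega
      exact Fin.succAbove_right_injective (hbinj this)
    have hderiv : derivative p = ∑ k : Fin m, C (c' k) * X ^ (a' k) := by
      have h1 : derivative p = ∑ i : Fin (m + 1), C (c i * (b i : ℝ)) * X ^ (b i - 1) := by
        rw [hpdef, derivative_sum]
        refine Finset.sum_congr rfl fun i _ => ?_
        rw [derivative_C_mul, derivative_X_pow, C_mul, mul_assoc]
      rw [h1, Fin.sum_univ_succAbove _ j]
      simp only [hbj, Nat.cast_zero, mul_zero, map_zero, zero_mul, zero_add]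
      rfl
    obtain ⟨hfin', hcard'⟩ := IH c' a' hc' ha'
    set s := hfin.toFinset with hsdef
    set t := hfin'.toFinset with htdef
    have hst : s.card ≤ (t \ s).card + 1 := by
      apply Finset.card_le_diff_of_interleaved
      intro x hx y hy hxy _
      rw [hsdef, Set.Finite.mem_toFinset, Set.mem_setOf_eq] at hx hy
      obtain ⟨z, hz, hz0⟩ := exists_deriv_eq_zero hxy
        (Polynomial.continuousOn p) (by rw [hpeval, hpeval, hx.2, hy.2])
      refine ⟨z, ?_, hz.1, hz.2⟩
      rw [htdef, Set.Finite.mem_toFinset, Set.mem_setOf_eq]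
      refine ⟨hx.1.trans hz.1, ?_⟩
      have := Polynomial.deriv (x := z) p
      rw [hz0] at this
      rw [hderiv] at this
      have h2 : eval z (∑ k : Fin m, C (c' k) * X ^ (a' k)) = ∑ k, c' k * z ^ (a' k) := by
        simp [eval_finset_sum]
      rw [h2] at this
      exact this.symm
    rw [hSeq]
    refine ⟨hfin, ?_⟩
    rw [Set.ncard_eq_toFinset_card _ hfin]
    calc s.card ≤ (t \ s).card + 1 := hst
      _ ≤ t.card + 1 := by
          exact Nat.add_le_add_right (Finset.card_le_card (Finset.sdiff_subset)) 1
      _ ≤ (m - 1) + 1 := by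
          rw [htdef, ← Set.ncard_eq_toFinset_card _ hfin']
          omega
      _ ≤ (m + 1) - 1 := by omega

/-- Descartes' rule corollary: a univariate real polynomial with exactly `m`
nonzero terms has at most `m - 1` positive real roots. -/
theorem descartes_corollary_nat_exponents (m : ℕ) (hm : 1 ≤ m)
    (c : Fin m → ℝ) (a : Fin m → ℕ)
    (hc : ∀ i, c i ≠ 0) (ha : Function.Injective a) :
    {x : ℝ | 0 < x ∧ ∑ i, c i * x ^ (a i) = 0}.Finite ∧
    {x : ℝ | 0 < x ∧ ∑ i, c i * x ^ (a i) = 0}.ncard ≤ m - 1 :=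
  descartes_key m hm c a hc ha
end

section
/- A univariate generalized polynomial (allowing real exponents) with m nonzero terms has at most m−1 positive real roots. -/
/-- Counting lemma via Rolle: if the derivative of `f` (given by `f'`) has at most `n`
positive zeros, then `f` has at most `n + 1` positive zeros. -/
lemma zeros_le_of_deriv (f f' : ℝ → ℝ) (n : ℕ)
    (hf : ∀ x : ℝ, 0 < x → HasDerivAt f (f' x) x)
    (hfin : {x : ℝ | 0 < x ∧ f' x = 0}.Finite)
    (hcard : {x : ℝ | 0 < x ∧ f' x = 0}.ncard ≤ n) :
    {x : ℝ | 0 < x ∧ f x = 0}.Finite ∧ {x : ℝ | 0 < x ∧ f x = 0}.ncard ≤ n + 1 := by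
  set Z : Set ℝ := {x : ℝ | 0 < x ∧ f x = 0} with hZ
  set Z' : Set ℝ := {x : ℝ | 0 < x ∧ f' x = 0} with hZ'
  -- Property: z is a critical point strictly between x and every element of s above x
  have key : ∀ s : Finset ℝ, ↑s ⊆ Z → s.card ≤ n + 1 := by
    intro s hs
    by_contra hlt
    push_neg at hlt
    have hcard2 : n + 2 ≤ s.card := hlt
    have hne : s.Nonempty := Finset.card_pos.mp (by omega)
    set M := s.max' hne with hM
    set T := s.erase M with hT
    -- property relating x to a critical point z
    set P : ℝ → ℝ → Prop := fun x z =>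
      x < z ∧ z ∈ Z' ∧ ∀ y ∈ s, x < y → z < y with hP
    have hex : ∀ x ∈ T, ∃ z, P x z := by
      intro x hx
      have hxs : x ∈ s := Finset.mem_of_mem_erase hx
      have hxM : x ≠ M := Finset.ne_of_mem_erase hx
      have hxleM : x ≤ M := s.le_max' x hxs
      have hxltM : x < M := lt_of_le_of_ne hxleM hxM
      set F := s.filter (fun y => x < y) with hF
      have hMF : M ∈ F := Finset.mem_filter.mpr ⟨s.max'_mem hne, hxltM⟩
      have hFne : F.Nonempty := ⟨M, hMF⟩
      set y := F.min' hFne with hy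
      have hyF : y ∈ F := F.min'_mem hFne
      have hys : y ∈ s := (Finset.mem_filter.mp hyF).1
      have hxy : x < y := (Finset.mem_filter.mp hyF).2
      have hx0 : 0 < x := (hs hxs).1
      have hfx : f x = 0 := (hs hxs).2
      have hfy : f y = 0 := (hs hys).2
      have hcont : ContinuousOn f (Set.Icc x y) := by
        intro t ht
        have ht0 : 0 < t := lt_of_lt_of_le hx0 ht.1
        exact ((hf t ht0).continuousAt).continuousWithinAt
      obtain ⟨z, hzI, hz0⟩ := exists_deriv_eq_zero hxy hcont (hfx.trans hfy.symm)
      have hz0' : 0 < z := hx0.trans hzI.1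
      have : f' z = 0 := by
        rw [← (hf z hz0').deriv]; exact hz0
      refine ⟨z, hzI.1, ⟨hz0', this⟩, ?_⟩
      intro y' hy's hxy'
      have : y ≤ y' := F.min'_le y' (Finset.mem_filter.mpr ⟨hy's, hxy'⟩)
      exact lt_of_lt_of_le hzI.2 this
    classical
    set φ : ℝ → ℝ := fun x => if h : ∃ z, P x z then h.choose else 0 with hφ
    have hφP : ∀ x ∈ T, P x (φ x) := by
      intro x hx
      have h := hex x hx
      simp only [hφ, dif_pos h]
      exact h.choose_spec
    have hmaps : ∀ x ∈ (↑T : Set ℝ), φ x ∈ Z' := fun x hx => (hφP x hx).2.1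
    have hinj : Set.InjOn φ ↑T := by
      intro x₁ h₁ x₂ h₂ heq
      by_contra hne'
      rcases lt_or_gt_of_ne hne' with h | h
      · have hx₂s : x₂ ∈ s := Finset.mem_of_mem_erase h₂
        have h1 := hφP x₁ h₁
        have h2 := hφP x₂ h₂
        have t1 : φ x₁ < x₂ := h1.2.2 x₂ hx₂s h
        have t2 : φ x₁ < φ x₂ := t1.trans h2.1
        exact absurd heq (ne_of_lt t2)
      · have hx₁s : x₁ ∈ s := Finset.mem_of_mem_erase h₁
        have h1 := hφP x₁ h₁
        have h2 := hφP x₂ h₂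
        have t1 : φ x₂ < x₁ := h2.2.2 x₁ hx₁s h
        have t2 : φ x₂ < φ x₁ := t1.trans h1.1
        exact absurd heq (ne_of_gt t2)
    have hTle : (↑T : Set ℝ).ncard ≤ Z'.ncard :=
      Set.ncard_le_ncard_of_injOn φ hmaps hinj hfin
    have hTcard : (↑T : Set ℝ).ncard = T.card := Set.ncard_coe_finset T
    have hTc : T.card = s.card - 1 := Finset.card_erase_of_mem (s.max'_mem hne)
    omega
  have hZfin : Z.Finite := by
    by_contra hinf
    obtain ⟨t, hts, htc⟩ := Set.Infinite.exists_subset_card_eq hinf (n + 2)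
    have := key t hts
    omega
  refine ⟨hZfin, ?_⟩
  have h1 := key hZfin.toFinset (by simp)
  have h2 : Z.ncard = hZfin.toFinset.card := Set.ncard_eq_toFinset_card Z hZfin
  omega

lemma descartes_aux : ∀ (n : ℕ) (c a : Fin (n + 1) → ℝ), (∀ i, c i ≠ 0) → StrictMono a →
    {x : ℝ | 0 < x ∧ ∑ i, c i * x ^ (a i) = 0}.Finite ∧
    {x : ℝ | 0 < x ∧ ∑ i, c i * x ^ (a i) = 0}.ncard ≤ n := by
  intro n
  induction n with
  | zero =>
    intro c a hc ha
    have : {x : ℝ | 0 < x ∧ ∑ i, c i * x ^ (a i) = 0} = ∅ := by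
      ext x
      simp only [Set.mem_setOf_eq, Set.mem_empty_iff_false, iff_false, not_and]
      intro hx
      rw [Fin.sum_univ_one]
      exact mul_ne_zero (hc 0) (Real.rpow_pos_of_pos hx (a 0)).ne'
    rw [this]
    simp
  | succ n ih =>
    intro c a hc ha
    set b : Fin (n + 2) → ℝ := fun i => a i - a 0 with hb
    set g : ℝ → ℝ := fun x => ∑ i, c i * x ^ (b i) with hg
    -- zero sets agree
    have hZeq : {x : ℝ | 0 < x ∧ ∑ i, c i * x ^ (a i) = 0} = {x : ℝ | 0 < x ∧ g x = 0} := by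
      ext x
      simp only [Set.mem_setOf_eq, and_congr_right_iff]
      intro hx
      have hfac : ∑ i, c i * x ^ (a i) = x ^ (a 0) * g x := by
        rw [hg, Finset.mul_sum]
        refine Finset.sum_congr rfl fun i _ => ?_
        rw [hb]
        rw [show a i = a 0 + (a i - a 0) by ring, Real.rpow_add hx]
        ring
      rw [hfac]
      constructor
      · intro h
        rcases mul_eq_zero.mp h with h' | h'
        · exact absurd h' (Real.rpow_pos_of_pos hx (a 0)).ne'
        · exact h'
      · intro h; rw [h, mul_zero]
    rw [hZeq]
    -- derivative data
    set d : Fin (n + 1) → ℝ := fun j => c j.succ * b j.succ with hd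
    set e : Fin (n + 1) → ℝ := fun j => b j.succ - 1 with he
    set g' : ℝ → ℝ := fun x => ∑ j, d j * x ^ (e j) with hg'
    have hderiv : ∀ x : ℝ, 0 < x → HasDerivAt g (g' x) x := by
      intro x hx
      have h1 : HasDerivAt g (∑ i, c i * (b i * x ^ (b i - 1))) x := by
        refine HasDerivAt.fun_sum fun i _ => ?_
        exact (Real.hasDerivAt_rpow_const (Or.inl hx.ne')).const_mul (c i)
      have h2 : (∑ i, c i * (b i * x ^ (b i - 1))) = g' x := by
        rw [hg', Fin.sum_univ_succ]
        have hb0 : b 0 = 0 := by simp [hb]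
        rw [hb0]
        simp only [zero_mul, mul_zero, zero_add]
        refine Finset.sum_congr rfl fun j _ => ?_
        rw [hd, he]; ring
      rw [← h2]; exact h1
    have hd0 : ∀ j, d j ≠ 0 := by
      intro j
      apply mul_ne_zero (hc j.succ)
      have h1 : a 0 < a j.succ := ha (Fin.succ_pos j)
      show a j.succ - a 0 ≠ 0
      exact sub_ne_zero.mpr (ne_of_gt h1)
    have he0 : StrictMono e := by
      intro j k hjk
      have : a j.succ < a k.succ := ha (Fin.succ_lt_succ_iff.mpr hjk)
      simp only [he, hb]
      linarith
    obtain ⟨hfin', hcard'⟩ := ih d e hd0 he0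
    have : {x : ℝ | 0 < x ∧ g' x = 0} = {x : ℝ | 0 < x ∧ ∑ i, d i * x ^ (e i) = 0} := rfl
    exact zeros_le_of_deriv g g' n hderiv (this ▸ hfin') (this ▸ hcard')

/-- Descartes' rule corollary for generalized polynomials with real exponents:
if `f x = ∑ cᵢ x^{aᵢ}` with nonzero real coefficients and strictly increasing
real exponents, then `f` has at most `m - 1` positive roots. -/
theorem descartes_corollary_real_exponents (m : ℕ) (hm : 1 ≤ m)
    (c : Fin m → ℝ) (a : Fin m → ℝ)
    (hc : ∀ i, c i ≠ 0) (ha : StrictMono a) :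
    {x : ℝ | 0 < x ∧ ∑ i, c i * x ^ (a i) = 0}.Finite ∧
    {x : ℝ | 0 < x ∧ ∑ i, c i * x ^ (a i) = 0}.ncard ≤ m - 1 := by
  obtain ⟨n, rfl⟩ : ∃ n, m = n + 1 := ⟨m - 1, (Nat.succ_pred_eq_of_pos hm).symm⟩
  simpa using descartes_aux n c a hc ha
end

section
/- If f is an m-nomial in n variables whose Newton polytope has dimension d ≤ n−1, then the zero set of f in the positive orthant has no compact connected components. -/
/-!
If the Newton polytope has dimension less than `n`, the exponents `a i` lie in an affine hyperplane
`v ⬝ᵥ p = w` with `v ≠ 0`. Then `f` is quasi-homogeneous: along the curve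
`s ↦ (x j * exp (s * v j))_j` it is multiplied by `exp (s * w)`, so the curve through a zero `x`
stays in the zero set. This curve is connected and unbounded (in any coordinate `j` with
`v j ≠ 0`), hence so is the connected component of `x`.
-/

open Set Matrix

theorem exists_dotProduct_eq_of_affineSpan_direction_ne_top {K ι : Type*} [Field K] [Fintype ι]
    {s : Set (ι → K)} (h : (affineSpan K s).direction ≠ ⊤) :
    ∃ v ≠ 0, ∃ w : K, ∀ p ∈ s, v ⬝ᵥ p = w := by
  classical
  obtain ⟨f, hf, hker⟩ := (affineSpan K s).direction.exists_le_ker_of_lt_top h.lt_top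
  obtain ⟨v, rfl⟩ := (dotProductEquiv K ι).surjective f
  refine ⟨v, by simpa using hf, ?_⟩
  rcases s.eq_empty_or_nonempty with rfl | ⟨p₀, hp₀⟩
  · exact ⟨0, by simp⟩
  refine ⟨v ⬝ᵥ p₀, fun p hp => ?_⟩
  have := hker (AffineSubspace.vsub_mem_direction (subset_affineSpan K s hp)
    (subset_affineSpan K s hp₀))
  simpa [sub_eq_zero, dotProduct_sub] using this

theorem not_isCompact_connectedComponentIn_of_not_isBounded {E : Type*} [PseudoMetricSpace E]
    {Z S : Set E} {x : E} (hS : IsPreconnected S) (hxS : x ∈ S) (hSZ : S ⊆ Z)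
    (hunb : ¬ Bornology.IsBounded S) : ¬ IsCompact (connectedComponentIn Z x) :=
  fun hK => hunb (hK.isBounded.subset (hS.subset_connectedComponentIn hxS hSZ))

section WeightedScaling

variable {ι : Type*}

noncomputable def weightedScaling (v x : ι → ℝ) (s : ℝ) : ι → ℝ :=
  fun j => x j * Real.exp (s * v j)

theorem continuous_weightedScaling (v x : ι → ℝ) : Continuous (weightedScaling v x) := by
  unfold weightedScaling; fun_prop

theorem weightedScaling_zero (v x : ι → ℝ) : weightedScaling v x 0 = x := by
  ext j; simp [weightedScaling]

theorem exists_weightedScaling_apply_gt {v x : ι → ℝ} {j : ι} (hx : 0 < x j) (hv : v j ≠ 0)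
    (r : ℝ) : ∃ s, r < weightedScaling v x s j := by
  refine ⟨Real.log ((|r| + 1) / x j) / v j, ?_⟩
  rw [weightedScaling, div_mul_cancel₀ _ hv, Real.exp_log (by positivity),
    mul_div_cancel₀ _ hx.ne']
  linarith [le_abs_self r]

theorem not_isBounded_range_weightedScaling {v x : ι → ℝ} {j : ι} (hx : 0 < x j)
    (hv : v j ≠ 0) : ¬ Bornology.IsBounded (range (weightedScaling v x)) := by
  intro hb
  obtain ⟨r, hr⟩ := (hb.image_eval j).bddAbove
  obtain ⟨s, hs⟩ := exists_weightedScaling_apply_gt hx hv r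
  exact hs.not_ge (hr ⟨_, mem_range_self s, rfl⟩)

theorem prod_weightedScaling_rpow [Fintype ι] {v x : ι → ℝ} (hx : ∀ j, 0 ≤ x j) (a : ι → ℝ)
    (s : ℝ) :
    ∏ j, weightedScaling v x s j ^ a j = Real.exp (s * (v ⬝ᵥ a)) * ∏ j, x j ^ a j := by
  simp only [weightedScaling, Real.mul_rpow (hx _) (Real.exp_pos _).le, ← Real.exp_mul,
    Finset.prod_mul_distrib, ← Real.exp_sum, dotProduct, Finset.mul_sum]
  rw [mul_comm]
  congr 2
  ring_nf

end WeightedScaling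

section Signomial

variable {κ ι : Type*} [Fintype κ] [Fintype ι]

noncomputable def signomial (c : κ → ℝ) (a : κ → ι → ℝ) (x : ι → ℝ) : ℝ :=
  ∑ i, c i * ∏ j, x j ^ a i j

def positiveZeroSet (c : κ → ℝ) (a : κ → ι → ℝ) : Set (ι → ℝ) :=
  {x | (∀ j, 0 < x j) ∧ signomial c a x = 0}

theorem signomial_weightedScaling {c : κ → ℝ} {a : κ → ι → ℝ} {v x : ι → ℝ} {w : ℝ}
    (hx : ∀ j, 0 ≤ x j) (hw : ∀ i, v ⬝ᵥ a i = w) (s : ℝ) :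
    signomial c a (weightedScaling v x s) = Real.exp (s * w) * signomial c a x := by
  simp only [signomial, prod_weightedScaling_rpow hx, hw, Finset.mul_sum]
  exact Finset.sum_congr rfl fun i _ => by ring

theorem weightedScaling_mem_positiveZeroSet {c : κ → ℝ} {a : κ → ι → ℝ} {v x : ι → ℝ} {w : ℝ}
    (hx : x ∈ positiveZeroSet c a) (hw : ∀ i, v ⬝ᵥ a i = w) (s : ℝ) :
    weightedScaling v x s ∈ positiveZeroSet c a := by
  obtain ⟨hxpos, hfx⟩ := hx
  refine ⟨fun j => mul_pos (hxpos j) (Real.exp_pos _), ?_⟩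
  rw [signomial_weightedScaling (fun j => (hxpos j).le) hw, hfx, mul_zero]

end Signomial

theorem no_compact_component_of_degenerate_newton_general (n m : ℕ) (hn : 1 ≤ n)
    (c : Fin m → ℝ) (a : Fin m → (Fin n → ℝ))
    (hdim : Module.finrank ℝ
      (affineSpan ℝ (convexHull ℝ (Set.range a))).direction ≤ n - 1) :
    ∀ x ∈ {x : Fin n → ℝ | (∀ j, 0 < x j) ∧ ∑ i, c i * ∏ j, x j ^ (a i j) = 0},
      ¬ IsCompact (connectedComponentIn
        {x : Fin n → ℝ | (∀ j, 0 < x j) ∧ ∑ i, c i * ∏ j, x j ^ (a i j) = 0}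
        x) := by
  intro x hx
  have hdir : (affineSpan ℝ (range a)).direction ≠ ⊤ := by
    intro htop
    rw [affineSpan_convexHull, htop, finrank_top, Module.finrank_fin_fun] at hdim
    omega
  obtain ⟨v, hv, w, hw⟩ := exists_dotProduct_eq_of_affineSpan_direction_ne_top hdir
  obtain ⟨j, hj⟩ := Function.ne_iff.mp hv
  exact not_isCompact_connectedComponentIn_of_not_isBounded
    (isPreconnected_range (continuous_weightedScaling v x)) ⟨0, weightedScaling_zero v x⟩
    (range_subset_iff.2 (weightedScaling_mem_positiveZeroSet hx
      fun i => hw _ (mem_range_self i)))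
    (not_isBounded_range_weightedScaling (hx.1 j) hj)

/-- If the Newton polytope of an `m`-nomial `f` in `n` variables has dimension
at most `n - 1`, then the zero set of `f` in the positive orthant has no
compact connected components. -/
theorem no_compact_component_of_degenerate_newton (n m : ℕ) (hn : 1 ≤ n)
    (c : Fin m → ℝ) (a : Fin m → (Fin n → ℝ))
    (hc : ∀ i, c i ≠ 0) (ha : Function.Injective a)
    (hdim : Module.finrank ℝ
      (affineSpan ℝ (convexHull ℝ (Set.range a))).direction ≤ n - 1) :
    ∀ x ∈ {x : Fin n → ℝ | (∀ j, 0 < x j) ∧ ∑ i, c i * ∏ j, x j ^ (a i j) = 0},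
      ¬ IsCompact (connectedComponentIn
        {x : Fin n → ℝ | (∀ j, 0 < x j) ∧ ∑ i, c i * ∏ j, x j ^ (a i j) = 0}
        x) :=
  no_compact_component_of_degenerate_newton_general n m hn c a hdim
end

section
/- Let f be a 4-nomial in two variables whose zero set Z in the positive quadrant has a compact connected component Γ with Z \ Γ nonempty. Then two of the coefficients of f are positive and the other two negative. -/
open Set Real

namespace FourNomialAux

variable {g : ℝ × ℝ → ℝ}

lemma ray_before (hg : ConvexOn ℝ Set.univ g) {p w : ℝ × ℝ} (hp : g p < 1)
    {s t : ℝ} (hs : 0 ≤ s) (hst : s < t) (ht : g (p + t • w) = 1) :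
    g (p + s • w) < 1 := by
  have ht0 : 0 < t := lt_of_le_of_lt hs hst
  have hst' : s / t * t = s := div_mul_cancel₀ s ht0.ne'
  have key : p + s • w = (1 - s / t) • p + (s / t) • (p + t • w) := by
    rw [smul_add, smul_smul, hst']; module
  have h1 : (0:ℝ) ≤ 1 - s / t := by
    have : s / t ≤ 1 := by
      rw [div_le_one ht0]; exact hst.le
    linarith
  have h2 : (0:ℝ) ≤ s / t := div_nonneg hs ht0.le
  have h3 : (1 - s / t) + s / t = 1 := by ring
  have hcv := hg.2 (mem_univ p) (mem_univ (p + t • w)) h1 h2 h3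
  rw [← key] at hcv
  rw [ht] at hcv
  simp only [smul_eq_mul] at hcv
  have hlt : 0 < 1 - s / t := by
    have : s / t < 1 := by rw [div_lt_one ht0]; exact hst
    linarith
  nlinarith

lemma ray_after (hg : ConvexOn ℝ Set.univ g) {p w : ℝ × ℝ} (hp : g p < 1)
    {t t' : ℝ} (h0t : 0 < t) (ht : g (p + t • w) = 1) (htt' : t < t') :
    1 < g (p + t' • w) := by
  by_contra h
  push_neg at h
  rcases eq_or_lt_of_le h with h1 | h1
  · have := ray_before hg hp h0t.le htt' h1
    linarith [ht ▸ this]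
  · have ht0' : 0 < t' := h0t.trans htt'
    have hst' : t / t' * t' = t := div_mul_cancel₀ t ht0'.ne'
    have key : p + t • w = (1 - t / t') • p + (t / t') • (p + t' • w) := by
      rw [smul_add, smul_smul, hst']; module
    have hA : (0:ℝ) ≤ 1 - t / t' := by
      have : t / t' ≤ 1 := by rw [div_le_one ht0']; exact htt'.le
      linarith
    have hB : (0:ℝ) ≤ t / t' := div_nonneg h0t.le ht0'.le
    have hcv := hg.2 (mem_univ p) (mem_univ (p + t' • w)) hA hB (by ring)
    rw [← key, ht] at hcv
    simp only [smul_eq_mul] at hcv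
    have hlt : 0 < 1 - t / t' := by
      have : t / t' < 1 := by rw [div_lt_one ht0']; exact htt'
      linarith
    nlinarith

lemma ray_unique (hg : ConvexOn ℝ Set.univ g) {p w : ℝ × ℝ} (hp : g p < 1)
    {t t' : ℝ} (h0t : 0 < t) (h0t' : 0 < t')
    (ht : g (p + t • w) = 1) (ht' : g (p + t' • w) = 1) : t = t' := by
  rcases lt_trichotomy t t' with h | h | h
  · exact absurd ht' (by have := ray_after hg hp h0t ht h; linarith)
  · exact h
  · exact absurd ht (by have := ray_after hg hp h0t' ht' h; linarith)

lemma polar {w : ℝ × ℝ} (hw : w ≠ 0) :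
    ∃ θ t : ℝ, 0 < t ∧ w = t • ((Real.cos θ, Real.sin θ) : ℝ × ℝ) := by
  set cz : ℂ := ⟨w.1, w.2⟩ with hcz
  have hcz0 : cz ≠ 0 := by
    intro h
    apply hw
    have h1 : cz.re = 0 := by rw [h]; simp
    have h2 : cz.im = 0 := by rw [h]; simp
    exact Prod.ext h1 h2
  have habs : 0 < ‖cz‖ := by
    simpa [norm_pos_iff] using hcz0
  refine ⟨Complex.arg cz, ‖cz‖, habs, ?_⟩
  have hc := Complex.cos_arg hcz0
  have hs := Complex.sin_arg cz
  have : (‖cz‖) • ((Real.cos (Complex.arg cz), Real.sin (Complex.arg cz)) : ℝ × ℝ)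
      = (w.1, w.2) := by
    rw [hc, hs, Prod.smul_mk, smul_eq_mul, smul_eq_mul]
    congr 1 <;> field_simp [hcz] <;> rfl
  rw [this]


noncomputable def vdir (θ : ℝ) : ℝ × ℝ := (Real.cos θ, Real.sin θ)

lemma continuous_vdir : Continuous vdir :=
  continuous_cos.prodMk continuous_sin

lemma loc (hg : ConvexOn ℝ Set.univ g) (hcont : Continuous g) {p : ℝ × ℝ} (hp : g p < 1)
    {θ₀ t₀ ε : ℝ} (h0 : 0 < t₀) (hcross : g (p + t₀ • vdir θ₀) = 1)
    (hε : 0 < ε) (hεt : ε < t₀) :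
    ∃ δ > 0, ∀ θ, |θ - θ₀| < δ →
      ∃ t, t₀ - ε < t ∧ t < t₀ + ε ∧ g (p + t • vdir θ) = 1 := by
  have hFcont : ∀ t : ℝ, Continuous fun θ => g (p + t • vdir θ) := fun t =>
    hcont.comp (continuous_const.add (continuous_vdir.const_smul t))
  have hlo : g (p + (t₀ - ε) • vdir θ₀) < 1 :=
    ray_before hg hp (by linarith) (by linarith) hcross
  have hhi : 1 < g (p + (t₀ + ε) • vdir θ₀) :=
    ray_after hg hp h0 hcross (by linarith)
  have hU : IsOpen {θ : ℝ | g (p + (t₀ - ε) • vdir θ) < 1 ∧ 1 < g (p + (t₀ + ε) • vdir θ)} :=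
    (isOpen_lt (hFcont _) continuous_const).inter (isOpen_lt continuous_const (hFcont _))
  obtain ⟨δ, hδ, hball⟩ := Metric.isOpen_iff.1 hU θ₀ ⟨hlo, hhi⟩
  refine ⟨δ, hδ, fun θ hθ => ?_⟩
  have hθU : g (p + (t₀ - ε) • vdir θ) < 1 ∧ 1 < g (p + (t₀ + ε) • vdir θ) :=
    hball (by rwa [Metric.mem_ball, Real.dist_eq])
  have hcontt : ContinuousOn (fun t : ℝ => g (p + t • vdir θ)) (Icc (t₀ - ε) (t₀ + ε)) :=
    (hcont.comp (continuous_const.add (continuous_id.smul continuous_const))).continuousOn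
  have hIcc : (1:ℝ) ∈ Icc (g (p + (t₀ - ε) • vdir θ)) (g (p + (t₀ + ε) • vdir θ)) :=
    ⟨hθU.1.le, hθU.2.le⟩
  obtain ⟨t, htmem, htval⟩ := intermediate_value_Icc (by linarith) hcontt hIcc
  refine ⟨t, ?_, ?_, htval⟩
  · rcases eq_or_lt_of_le htmem.1 with h | h
    · exact absurd htval (by rw [← h]; exact ne_of_lt hθU.1)
    · exact h
  · rcases eq_or_lt_of_le htmem.2 with h | h
    · exact absurd htval (by rw [h]; exact (ne_of_gt hθU.2))
    · exact h


/-- A compact connected component of a level set of a convex function on `ℝ²`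
cannot coexist with further points of the level set. -/
lemma no_compact_component (hg : ConvexOn ℝ Set.univ g) (hcont : Continuous g)
    {z : ℝ × ℝ} (hz : g z = 1)
    (hΓc : IsCompact (connectedComponentIn {x | g x = 1} z))
    (hne : ({x | g x = 1} \ connectedComponentIn {x | g x = 1} z).Nonempty) : False := by
  set S : Set (ℝ × ℝ) := {x | g x = 1} with hS
  set Γ : Set (ℝ × ℝ) := connectedComponentIn S z with hΓ
  have hzS : z ∈ S := hz
  obtain ⟨q, hqS, hqΓ⟩ := hne
  by_cases hlow : ∃ p, g p < 1
  case neg =>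
    push_neg at hlow
    have hSle : S = {x : ℝ × ℝ | x ∈ Set.univ ∧ g x ≤ 1} := by
      ext x
      simp only [hS, mem_setOf_eq, mem_univ, true_and]
      exact ⟨le_of_eq, fun h => le_antisymm h (hlow x)⟩
    have hpre : IsPreconnected S := by
      rw [hSle]; exact (hg.convex_le 1).isPreconnected
    exact hqΓ (by rw [hΓ, hpre.connectedComponentIn hzS]; exact hqS)
  obtain ⟨p, hp⟩ := hlow
  -- the set of angles whose ray from `p` meets `Γ`
  set T : Set ℝ := {θ : ℝ | ∃ t : ℝ, 0 < t ∧ p + t • vdir θ ∈ Γ} with hT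
  have hΓS : Γ ⊆ S := connectedComponentIn_subset S z
  have hmemS : ∀ {x : ℝ × ℝ}, x ∈ S → g x = 1 := fun h => h
  -- the crossing-time sets
  set A : ℝ → Set ℝ := fun θ => {t | 0 < t ∧ g (p + t • vdir θ) = 1} with hA
  set ρ : ℝ → ℝ := fun θ => sInf (A θ) with hρ
  have hAuniq : ∀ θ, ∀ {t t'}, t ∈ A θ → t' ∈ A θ → t = t' := by
    intro θ t t' ht ht'
    exact ray_unique hg hp ht.1 ht'.1 ht.2 ht'.2
  have hρmem : ∀ {θ t}, t ∈ A θ → ρ θ = t := by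
    intro θ t ht
    have : A θ = {t} := by
      apply Set.eq_singleton_iff_unique_mem.2
      exact ⟨ht, fun t' ht' => hAuniq θ ht' ht⟩
    rw [hρ]; simp only [this, csInf_singleton]
  -- key local statement
  have hkey : ∀ θ₁ t₁, t₁ ∈ A θ₁ → ∀ ε > (0:ℝ), ∃ δ > (0:ℝ), ∀ θ, |θ - θ₁| < δ →
      ρ θ ∈ A θ ∧ |ρ θ - t₁| < ε := by
    intro θ₁ t₁ ht₁ ε hε
    set ε' : ℝ := min ε (t₁ / 2) with hε'
    have hε'pos : 0 < ε' := lt_min hε (by linarith [ht₁.1])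
    have hε't : ε' < t₁ := lt_of_le_of_lt (min_le_right _ _) (by linarith [ht₁.1])
    obtain ⟨δ, hδ, hδloc⟩ := loc hg hcont hp ht₁.1 ht₁.2 hε'pos hε't
    refine ⟨δ, hδ, fun θ hθ => ?_⟩
    obtain ⟨t, htlo, hthi, htval⟩ := hδloc θ hθ
    have htpos : 0 < t := by linarith
    have htA : t ∈ A θ := ⟨htpos, htval⟩
    have := hρmem htA
    rw [this]
    refine ⟨htA, ?_⟩
    have : |t - t₁| < ε' := abs_sub_lt_iff.2 ⟨by linarith, by linarith⟩
    exact lt_of_lt_of_le this (min_le_left _ _)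
  -- T is nonempty
  have hTne : T.Nonempty := by
    have hzp : z - p ≠ 0 := by
      intro h
      have : z = p := by
        have := sub_eq_zero.1 h; exact this
      rw [this] at hz; linarith
    obtain ⟨θ, t, ht, hw⟩ := polar hzp
    refine ⟨θ, t, ht, ?_⟩
    have : p + t • vdir θ = z := by
      show p + t • ((Real.cos θ, Real.sin θ) : ℝ × ℝ) = z
      rw [← hw]; abel
    rw [this]; exact mem_connectedComponentIn hzS
  -- T is open
  have hTopen : IsOpen T := by
    rw [Metric.isOpen_iff]
    intro θ₀ hθ₀
    obtain ⟨t₀, ht₀pos, hx₀Γ⟩ := hθ₀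
    have hx₀S : p + t₀ • vdir θ₀ ∈ S := hΓS hx₀Γ
    have ht₀A : t₀ ∈ A θ₀ := ⟨ht₀pos, hmemS hx₀S⟩
    obtain ⟨δ, hδ, hδkey⟩ := hkey θ₀ t₀ ht₀A 1 one_pos
    refine ⟨δ, hδ, ?_⟩
    -- the graph over the ball is connected and lies in S, contains x₀
    set I : Set ℝ := Metric.ball θ₀ δ with hI
    set φ : ℝ → ℝ × ℝ := fun θ => p + ρ θ • vdir θ with hφ
    have hρcont : ∀ θ ∈ I, ContinuousAt ρ θ := by
      intro θ hθI
      have hθd : |θ - θ₀| < δ := by rwa [Metric.mem_ball, Real.dist_eq] at hθI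
      have hρθA : ρ θ ∈ A θ := (hδkey θ hθd).1
      rw [Metric.continuousAt_iff]
      intro ε hε
      obtain ⟨δ', hδ', hδ'key⟩ := hkey θ (ρ θ) hρθA ε hε
      exact ⟨δ', hδ', fun θ' hθ' => by
        rw [Real.dist_eq] at hθ' ⊢
        exact (hδ'key θ' hθ').2⟩
    have hφcont : ContinuousOn φ I := by
      intro θ hθI
      apply ContinuousAt.continuousWithinAt
      exact continuousAt_const.add ((hρcont θ hθI).smul continuous_vdir.continuousAt)
    have hφS : ∀ θ ∈ I, φ θ ∈ S := by
      intro θ hθI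
      have hθd : |θ - θ₀| < δ := by rwa [Metric.mem_ball, Real.dist_eq] at hθI
      exact ((hδkey θ hθd).1).2
    have hIconn : IsPreconnected I := (convex_ball θ₀ δ).isPreconnected
    have hΦconn : IsPreconnected (φ '' I) := hIconn.image φ hφcont
    have hθ₀I : θ₀ ∈ I := Metric.mem_ball_self hδ
    have hρθ₀ : ρ θ₀ = t₀ := hρmem ht₀A
    have hx₀Φ : p + t₀ • vdir θ₀ ∈ φ '' I :=
      ⟨θ₀, hθ₀I, by show p + ρ θ₀ • vdir θ₀ = p + t₀ • vdir θ₀; rw [hρθ₀]⟩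
    have hΦΓ : φ '' I ⊆ Γ := by
      have hΓeq : Γ = connectedComponentIn S (p + t₀ • vdir θ₀) := connectedComponentIn_eq hx₀Γ
      rw [hΓeq]
      apply hΦconn.subset_connectedComponentIn hx₀Φ
      rintro x ⟨θ, hθI, rfl⟩
      exact hφS θ hθI
    intro θ hθball
    have hθd : |θ - θ₀| < δ := by rwa [Metric.mem_ball, Real.dist_eq] at hθball
    have hρθA : ρ θ ∈ A θ := (hδkey θ hθd).1
    exact ⟨ρ θ, hρθA.1, hΦΓ ⟨θ, hθball, rfl⟩⟩
  -- T is closed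
  have hTclosed : IsClosed T := by
    rw [← closure_subset_iff_isClosed]
    intro θ' hθ'
    obtain ⟨u, hu, hulim⟩ := mem_closure_iff_seq_limit.1 hθ'
    choose t htpos hxΓ using hu
    obtain ⟨x', hx'Γ, ψ, hψ, hxlim⟩ := hΓc.tendsto_subseq hxΓ
    have hx'S : x' ∈ S := hΓS hx'Γ
    have hx'p : x' ≠ p := by
      intro h; rw [h] at hx'S; exact absurd (hmemS hx'S) (by linarith)
    set nrm : ℝ × ℝ → ℝ := fun y => Real.sqrt (y.1 ^ 2 + y.2 ^ 2) with hnrm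
    have hnrmcont : Continuous nrm := by
      apply Real.continuous_sqrt.comp
      fun_prop
    have hnrmt : ∀ n, nrm (p + t n • vdir (u n) - p) = t n := by
      intro n
      rw [hnrm]
      simp only [add_sub_cancel_left, vdir, Prod.smul_mk, smul_eq_mul]
      rw [mul_pow, mul_pow, ← mul_add, Real.cos_sq_add_sin_sq, mul_one]
      exact Real.sqrt_sq (htpos n).le
    set t' : ℝ := nrm (x' - p) with ht'
    have ht'pos : 0 < t' := by
      rw [ht', hnrm]
      apply Real.sqrt_pos.2
      have hcomp : (x' - p).1 ≠ 0 ∨ (x' - p).2 ≠ 0 := by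
        by_contra hcon
        push_neg at hcon
        exact sub_ne_zero.2 hx'p (Prod.ext hcon.1 hcon.2)
      rcases hcomp with h | h
      · have h1 : 0 < (x' - p).1 ^ 2 :=
          lt_of_le_of_ne (sq_nonneg _) (Ne.symm (pow_ne_zero 2 h))
        nlinarith [sq_nonneg ((x' - p).2)]
      · have h1 : 0 < (x' - p).2 ^ 2 :=
          lt_of_le_of_ne (sq_nonneg _) (Ne.symm (pow_ne_zero 2 h))
        nlinarith [sq_nonneg ((x' - p).1)]
    have htlim : Filter.Tendsto (fun n => t (ψ n)) Filter.atTop (nhds t') := by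
      have : (fun n => t (ψ n)) = fun n => nrm ((p + t (ψ n) • vdir (u (ψ n))) - p) := by
        funext n; rw [hnrmt (ψ n)]
      rw [this, ht']
      exact (hnrmcont.tendsto _).comp (hxlim.sub_const p)
    have hulim' : Filter.Tendsto (fun n => u (ψ n)) Filter.atTop (nhds θ') :=
      hulim.comp (hψ.tendsto_atTop)
    have hxlim2 : Filter.Tendsto (fun n => p + t (ψ n) • vdir (u (ψ n))) Filter.atTop
        (nhds (p + t' • vdir θ')) := by
      apply Filter.Tendsto.const_add
      exact htlim.smul ((continuous_vdir.tendsto _).comp hulim')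
    have hx'eq : x' = p + t' • vdir θ' := tendsto_nhds_unique hxlim hxlim2
    exact ⟨t', ht'pos, hx'eq ▸ hx'Γ⟩
  -- conclude T = univ
  have hTuniv : T = Set.univ := IsClopen.eq_univ ⟨hTclosed, hTopen⟩ hTne
  -- derive contradiction using q
  have hqp : q - p ≠ 0 := by
    intro h
    have : q = p := sub_eq_zero.1 h
    rw [hS] at hqS
    rw [this] at hqS
    exact absurd hqS (by simp only [mem_setOf_eq]; linarith)
  obtain ⟨θq, tq, htq, hwq⟩ := polar hqp
  have hqeq : q = p + tq • vdir θq := by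
    have : p + tq • ((Real.cos θq, Real.sin θq) : ℝ × ℝ) = q := by rw [← hwq]; abel
    exact (this).symm
  have hθqT : θq ∈ T := hTuniv ▸ mem_univ θq
  obtain ⟨t, htpos, htΓ⟩ := hθqT
  have htS : p + t • vdir θq ∈ S := hΓS htΓ
  have hqcross : g (p + tq • vdir θq) = 1 := by rw [← hqeq]; exact hmemS hqS
  have : t = tq := ray_unique hg hp htpos htq (hmemS htS) hqcross
  rw [this] at htΓ
  exact hqΓ (hqeq ▸ htΓ)


end FourNomialAux

namespace FourNomialAux

lemma one_sign_impossible
    (c : Fin 4 → ℝ) (a : Fin 4 → ℝ × ℝ) (i₀ : Fin 4)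
    (hc0 : c i₀ ≠ 0) (hopp : ∀ i, i ≠ i₀ → c i / c i₀ < 0)
    (f : ℝ × ℝ → ℝ)
    (hf : ∀ x : ℝ × ℝ, f x = ∑ i, c i * (x.1 ^ (a i).1 * x.2 ^ (a i).2))
    (Z : Set (ℝ × ℝ)) (hZ : Z = {x : ℝ × ℝ | 0 < x.1 ∧ 0 < x.2 ∧ f x = 0})
    (z : ℝ × ℝ) (hz : z ∈ Z)
    (hΓc : IsCompact (connectedComponentIn Z z))
    (hne : (Z \ connectedComponentIn Z z).Nonempty) : False := by
  classical
  -- linear forms and exponents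
  set E : Fin 4 → ℝ × ℝ → ℝ := fun i u => (a i).1 * u.1 + (a i).2 * u.2 with hE
  set L : Fin 4 → ℝ × ℝ → ℝ := fun i u => E i u - E i₀ u with hL
  set d : Fin 4 → ℝ := fun i => -(c i / c i₀) with hd
  set g : ℝ × ℝ → ℝ := fun u => ∑ i ∈ Finset.univ.erase i₀, d i * Real.exp (L i u) with hg
  have hdpos : ∀ i ∈ Finset.univ.erase i₀, 0 ≤ d i := by
    intro i hi
    have := hopp i (Finset.mem_erase.1 hi).1
    simp only [hd]; linarith
  -- convexity of g
  have hgconv : ConvexOn ℝ Set.univ g := by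
    refine ⟨convex_univ, fun x _ y _ la mu hla hmu hs => ?_⟩
    have hlin : ∀ i : Fin 4, L i (la • x + mu • y) = la * L i x + mu * L i y := by
      intro i
      simp only [hL, hE, Prod.fst_add, Prod.snd_add, Prod.smul_fst, Prod.smul_snd, smul_eq_mul]
      ring
    simp only [smul_eq_mul, hg]
    calc ∑ i ∈ Finset.univ.erase i₀, d i * Real.exp (L i (la • x + mu • y))
        ≤ ∑ i ∈ Finset.univ.erase i₀,
            d i * (la * Real.exp (L i x) + mu * Real.exp (L i y)) := by
          apply Finset.sum_le_sum
          intro i hi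
          apply mul_le_mul_of_nonneg_left _ (hdpos i hi)
          rw [hlin i]
          have := convexOn_exp.2 (mem_univ (L i x)) (mem_univ (L i y)) hla hmu hs
          simpa [smul_eq_mul] using this
      _ = la * ∑ i ∈ Finset.univ.erase i₀, d i * Real.exp (L i x)
            + mu * ∑ i ∈ Finset.univ.erase i₀, d i * Real.exp (L i y) := by
          rw [Finset.mul_sum, Finset.mul_sum, ← Finset.sum_add_distrib]
          apply Finset.sum_congr rfl
          intro i _
          ring
  have hgcont : Continuous g := by
    apply continuous_finset_sum
    intro i _
    apply Continuous.mul continuous_const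
    apply Real.continuous_exp.comp
    simp only [hL, hE]
    fun_prop
  -- the key identity
  have hid : ∀ u : ℝ × ℝ, f (Real.exp u.1, Real.exp u.2)
      = c i₀ * Real.exp (E i₀ u) * (1 - g u) := by
    intro u
    rw [hf]
    have hterm : ∀ i : Fin 4,
        c i * ((Real.exp u.1) ^ (a i).1 * (Real.exp u.2) ^ (a i).2)
          = c i * Real.exp (E i u) := by
      intro i
      congr 1
      rw [Real.rpow_def_of_pos (Real.exp_pos _), Real.rpow_def_of_pos (Real.exp_pos _),
        Real.log_exp, Real.log_exp, ← Real.exp_add]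
      congr 1
      simp only [hE]; ring
    simp only [hterm]
    rw [← Finset.add_sum_erase _ _ (Finset.mem_univ i₀)]
    rw [hg, mul_sub, mul_one, Finset.mul_sum]
    have hterm2 : ∀ i ∈ Finset.univ.erase i₀,
        c i₀ * Real.exp (E i₀ u) * (d i * Real.exp (L i u)) = -(c i * Real.exp (E i u)) := by
      intro i _
      have h1 : c i₀ * d i = -(c i) := by
        simp only [hd]
        field_simp
      have h2 : Real.exp (E i₀ u) * Real.exp (L i u) = Real.exp (E i u) := by
        rw [← Real.exp_add]
        congr 1
        simp only [hL]; ring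
      calc c i₀ * Real.exp (E i₀ u) * (d i * Real.exp (L i u))
          = (c i₀ * d i) * (Real.exp (E i₀ u) * Real.exp (L i u)) := by ring
        _ = -(c i * Real.exp (E i u)) := by rw [h1, h2]; ring
    rw [Finset.sum_congr rfl hterm2, Finset.sum_neg_distrib, sub_neg_eq_add]
  -- membership correspondence
  have hZg : ∀ u : ℝ × ℝ, (Real.exp u.1, Real.exp u.2) ∈ Z ↔ g u = 1 := by
    intro u
    rw [hZ]
    simp only [mem_setOf_eq, Real.exp_pos, true_and]
    rw [hid u]
    constructor
    · intro h
      have hne1 : c i₀ * Real.exp (E i₀ u) ≠ 0 := mul_ne_zero hc0 (Real.exp_ne_zero _)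
      have := (mul_eq_zero.1 h).resolve_left hne1
      linarith
    · intro h; rw [h]; ring
  -- the homeomorphism-like maps
  set Em : ℝ × ℝ → ℝ × ℝ := fun u => (Real.exp u.1, Real.exp u.2) with hEm
  set Lm : ℝ × ℝ → ℝ × ℝ := fun x => (Real.log x.1, Real.log x.2) with hLm
  have hEmcont : Continuous Em := by fun_prop
  have hLmat : ∀ x : ℝ × ℝ, x ∈ Z → ContinuousAt Lm x := by
    intro x hx
    rw [hZ] at hx
    exact ((Real.continuousAt_log hx.1.ne').comp continuousAt_fst).prodMk
      ((Real.continuousAt_log hx.2.1.ne').comp continuousAt_snd)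
  have hEL : ∀ x : ℝ × ℝ, x ∈ Z → Em (Lm x) = x := by
    intro x hx
    rw [hZ] at hx
    simp only [hEm, hLm, Real.exp_log hx.1, Real.exp_log hx.2.1]
  have hLE : ∀ u : ℝ × ℝ, Lm (Em u) = u := by
    intro u
    simp only [hEm, hLm, Real.log_exp]
  set S : Set (ℝ × ℝ) := {u | g u = 1} with hSdef
  set z' : ℝ × ℝ := Lm z with hz'
  have hEz : Em z' = z := hEL z hz
  have hz'S : g z' = 1 := by
    rw [← hZg z']
    show Em z' ∈ Z
    rw [hEz]; exact hz
  set Γ : Set (ℝ × ℝ) := connectedComponentIn Z z with hΓdef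
  set Γ' : Set (ℝ × ℝ) := connectedComponentIn S z' with hΓ'def
  have hΓZ : Γ ⊆ Z := connectedComponentIn_subset Z z
  have hΓ'S : Γ' ⊆ S := connectedComponentIn_subset S z'
  have hES : ∀ u ∈ S, Em u ∈ Z := fun u hu => (hZg u).2 hu
  have hLS : ∀ x ∈ Z, Lm x ∈ S := by
    intro x hx
    show g (Lm x) = 1
    rw [← hZg (Lm x)]
    show Em (Lm x) ∈ Z
    rw [hEL x hx]; exact hx
  have hLmΓ : ContinuousOn Lm Γ := fun x hx => (hLmat x (hΓZ hx)).continuousWithinAt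
  have hsub1 : Em '' Γ' ⊆ Γ := by
    apply (isPreconnected_connectedComponentIn.image Em hEmcont.continuousOn).subset_connectedComponentIn
    · exact ⟨z', mem_connectedComponentIn hz'S, hEz⟩
    · rintro x ⟨u, hu, rfl⟩
      exact hES u (hΓ'S hu)
  have hsub2 : Lm '' Γ ⊆ Γ' := by
    apply (isPreconnected_connectedComponentIn.image Lm hLmΓ).subset_connectedComponentIn
    · exact ⟨z, mem_connectedComponentIn hz, rfl⟩
    · rintro x ⟨u, hu, rfl⟩
      exact hLS u (hΓZ hu)
  have hΓeq : Em '' Γ' = Γ := by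
    apply Subset.antisymm hsub1
    intro x hx
    refine ⟨Lm x, hsub2 ⟨x, hx, rfl⟩, hEL x (hΓZ hx)⟩
  have hΓ'eq : Γ' = Lm '' Γ := by
    apply Subset.antisymm _ hsub2
    intro u hu
    refine ⟨Em u, ?_, hLE u⟩
    rw [← hΓeq]
    exact ⟨u, hu, rfl⟩
  have hΓ'c : IsCompact Γ' := by
    rw [hΓ'eq]
    exact hΓc.image_of_continuousOn hLmΓ
  obtain ⟨q, hqZ, hqΓ⟩ := hne
  have hne' : (S \ Γ').Nonempty := by
    refine ⟨Lm q, hLS q hqZ, fun hqΓ' => ?_⟩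
    apply hqΓ
    have : Em (Lm q) ∈ Em '' Γ' := ⟨Lm q, hqΓ', rfl⟩
    rw [hΓeq, hEL q hqZ] at this
    exact this
  exact no_compact_component hgconv hgcont hz'S hΓ'c hne'


end FourNomialAux

set_option linter.unusedVariables false

/-- If the zero set `Z` of a bivariate 4-nomial `f` in the positive quadrant
has a compact connected component `Γ` with `Z \ Γ` nonempty, then exactly two
of the coefficients of `f` are positive and the other two negative. -/
theorem four_nomial_compact_component_signs
    (c : Fin 4 → ℝ) (a : Fin 4 → ℝ × ℝ)
    (hc : ∀ i, c i ≠ 0) (ha : Function.Injective a)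
    (f : ℝ × ℝ → ℝ)
    (hf : ∀ x : ℝ × ℝ, f x = ∑ i, c i * (x.1 ^ (a i).1 * x.2 ^ (a i).2))
    (Z : Set (ℝ × ℝ)) (hZ : Z = {x : ℝ × ℝ | 0 < x.1 ∧ 0 < x.2 ∧ f x = 0})
    (Γ : Set (ℝ × ℝ)) (z : ℝ × ℝ) (hz : z ∈ Z)
    (hΓ : Γ = connectedComponentIn Z z) (hΓc : IsCompact Γ)
    (hne : (Z \ Γ).Nonempty) :
    (Finset.univ.filter (fun i => 0 < c i)).card = 2 ∧
    (Finset.univ.filter (fun i => c i < 0)).card = 2 := by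
  classical
  subst hΓ
  have hzZ := hz
  rw [hZ] at hzZ
  obtain ⟨hz1, hz2, hzf⟩ := hzZ
  have hterm : ∀ i : Fin 4, 0 < z.1 ^ (a i).1 * z.2 ^ (a i).2 := fun i =>
    mul_pos (Real.rpow_pos_of_pos hz1 _) (Real.rpow_pos_of_pos hz2 _)
  set P := Finset.univ.filter (fun i => 0 < c i) with hP
  set N := Finset.univ.filter (fun i => c i < 0) with hN
  have hNeq : N = Finset.univ.filter (fun i => ¬ 0 < c i) := by
    ext i
    simp only [hN, Finset.mem_filter, Finset.mem_univ, true_and]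
    constructor
    · intro h; linarith
    · intro h; exact lt_of_le_of_ne (not_lt.1 h) (hc i)
  have hPN : P.card + N.card = 4 := by
    rw [hNeq, hP, Finset.card_filter_add_card_filter_not]
    simp
  have hk4 : P.card ≤ 4 := by omega
  have hcases : P.card = 0 ∨ P.card = 1 ∨ P.card = 2 ∨ P.card = 3 ∨ P.card = 4 := by omega
  rcases hcases with h | h | h | h | h
  · -- all coefficients negative : f z < 0
    exfalso
    have hall : ∀ i : Fin 4, c i < 0 := by
      intro i
      have : i ∉ P := by rw [Finset.card_eq_zero.1 h]; exact Finset.notMem_empty i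
      simp only [hP, Finset.mem_filter, Finset.mem_univ, true_and, not_lt] at this
      exact lt_of_le_of_ne this (hc i)
    have : f z < 0 := by
      rw [hf]
      apply Finset.sum_neg
      · intro i _
        exact mul_neg_of_neg_of_pos (hall i) (hterm i)
      · exact Finset.univ_nonempty
    linarith
  · -- exactly one positive coefficient
    exfalso
    obtain ⟨i₀, hi₀⟩ := Finset.card_eq_one.1 h
    have hci₀ : 0 < c i₀ := by
      have : i₀ ∈ P := by rw [hi₀]; exact Finset.mem_singleton_self i₀
      simpa only [hP, Finset.mem_filter, Finset.mem_univ, true_and] using this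
    have hopp : ∀ i, i ≠ i₀ → c i / c i₀ < 0 := by
      intro i hi
      have : i ∉ P := by rw [hi₀]; simpa using hi
      simp only [hP, Finset.mem_filter, Finset.mem_univ, true_and, not_lt] at this
      exact div_neg_of_neg_of_pos (lt_of_le_of_ne this (hc i)) hci₀
    exact FourNomialAux.one_sign_impossible c a i₀ hci₀.ne' hopp f hf Z hZ z hz hΓc hne
  · exact ⟨h, by omega⟩
  · -- exactly one negative coefficient
    exfalso
    have hN1 : N.card = 1 := by omega
    obtain ⟨i₀, hi₀⟩ := Finset.card_eq_one.1 hN1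
    have hci₀ : c i₀ < 0 := by
      have : i₀ ∈ N := by rw [hi₀]; exact Finset.mem_singleton_self i₀
      simpa only [hN, Finset.mem_filter, Finset.mem_univ, true_and] using this
    have hopp : ∀ i, i ≠ i₀ → c i / c i₀ < 0 := by
      intro i hi
      have : i ∉ N := by rw [hi₀]; simpa using hi
      simp only [hN, Finset.mem_filter, Finset.mem_univ, true_and, not_lt] at this
      exact div_neg_of_pos_of_neg (lt_of_le_of_ne this (Ne.symm (hc i))) hci₀
    exact FourNomialAux.one_sign_impossible c a i₀ hci₀.ne hopp f hf Z hZ z hz hΓc hne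
  · -- all coefficients positive : f z > 0
    exfalso
    have hall : ∀ i : Fin 4, 0 < c i := by
      intro i
      have hPuniv : P = Finset.univ := Finset.eq_univ_of_card P (by simpa using h)
      have : i ∈ P := by rw [hPuniv]; exact Finset.mem_univ i
      simpa only [hP, Finset.mem_filter, Finset.mem_univ, true_and] using this
    have : 0 < f z := by
      rw [hf]
      apply Finset.sum_pos
      · intro i _
        exact mul_pos (hall i) (hterm i)
      · exact Finset.univ_nonempty
    linarith
end

section
/- Let f(x₁,x₂) = 1 − x₁ − x₂ + A x₁^c x₂^d with A > 0 and c, d > 1, and suppose p ∈ ℝ_{>0}^2 is a critical point of f with f(p) = 0 and the zero set Z of f in the positive quadrant contains a point other than p. Then Z is connected and non-compact. -/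
open Real Set Filter Topology
open Real Set Filter Topology

noncomputable def ncpF (A c d x y : ℝ) : ℝ := 1 - x - y + A * x ^ c * y ^ d

noncomputable def ncpYc (A c d x : ℝ) : ℝ := (A * d * x ^ c) ^ (-(d-1)⁻¹)

lemma ncp_core (γ t : ℝ) (ht : 0 < t) (hγ : 0 ≤ γ) : 1 - γ * (t - 1) ≤ t ^ (-γ) := by
  rw [Real.rpow_def_of_pos ht, mul_comm (Real.log t) (-γ)]
  have h1 := Real.add_one_le_exp (-γ * Real.log t)
  have h2 := Real.log_le_sub_one_of_pos ht
  nlinarith [mul_le_mul_of_nonneg_left h2 hγ]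

lemma ncp_base_pos {A c d x : ℝ} (hA : 0 < A) (hd : 1 < d) (hx : 0 < x) :
    0 < A * d * x ^ c :=
  mul_pos (mul_pos hA (by linarith)) (Real.rpow_pos_of_pos hx c)

lemma ncpYc_pos {A c d x : ℝ} (hA : 0 < A) (hd : 1 < d) (hx : 0 < x) :
    0 < ncpYc A c d x :=
  Real.rpow_pos_of_pos (ncp_base_pos hA hd hx) _

lemma ncpYc_pow {A c d x : ℝ} (hA : 0 < A) (hd : 1 < d) (hx : 0 < x) :
    (ncpYc A c d x) ^ (d-1) = (A * d * x ^ c)⁻¹ := by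
  have hb := ncp_base_pos hA hd hx (c := c)
  have hd1 : d - 1 ≠ 0 := by linarith
  rw [ncpYc, ← Real.rpow_mul hb.le]
  rw [show -(d-1)⁻¹ * (d-1) = -1 by field_simp]
  exact Real.rpow_neg_one _

lemma ncp_adyc {A c d x : ℝ} (hA : 0 < A) (hd : 1 < d) (hx : 0 < x) :
    A * d * x ^ c * (ncpYc A c d x) ^ (d-1) = 1 := by
  rw [ncpYc_pow hA hd hx]
  exact mul_inv_cancel₀ (ncp_base_pos hA hd hx).ne'

lemma ncp_rpow_split {y d : ℝ} (hy : 0 < y) : y ^ d = y ^ (d-1) * y := by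
  have h := (Real.rpow_add hy (d-1) 1).symm
  rw [Real.rpow_one] at h
  norm_num at h
  exact h.symm

lemma ncpF_at_yc {A c d x : ℝ} (hA : 0 < A) (hd : 1 < d) (hx : 0 < x) :
    ncpF A c d x (ncpYc A c d x) = 1 - x - (1 - 1/d) * ncpYc A c d x := by
  have hyc := ncpYc_pos hA hd hx (c := c)
  have hxc := Real.rpow_pos_of_pos hx c
  have h1 : A * x ^ c * (ncpYc A c d x) ^ d = ncpYc A c d x / d := by
    rw [ncp_rpow_split hyc, ncpYc_pow hA hd hx]
    field_simp
  rw [ncpF, h1]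
  have hd0 : (d:ℝ) ≠ 0 := by positivity
  field_simp
  ring

section
variable {A c d x : ℝ}


lemma ncp_deriv (hy : 0 < y) :
    HasDerivAt (ncpF A c d x) (A * x ^ c * (d * y ^ (d-1)) - 1) y := by
  have h1 : HasDerivAt (fun y : ℝ => y ^ d) (d * y ^ (d-1)) y :=
    Real.hasDerivAt_rpow_const (Or.inl hy.ne')
  have h2 := ((h1.const_mul (A * x ^ c)).const_add (1 - x)).sub (hasDerivAt_id y)
  have h3 : ncpF A c d x = fun y : ℝ => 1 - x + A * x ^ c * y ^ d - id y := by
    funext y; simp [ncpF, id]; ring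
  rw [h3]
  exact h2

lemma ncp_contOn : ContinuousOn (ncpF A c d x) (Ioi 0) := by
  have h : ContinuousOn (fun y : ℝ => y ^ d) (Ioi (0:ℝ)) := fun y hy =>
    (Real.continuousAt_rpow_const y d (Or.inl (ne_of_gt hy))).continuousWithinAt
  exact ((continuous_const.sub continuous_id).continuousOn).add (continuousOn_const.mul h)

lemma ncp_mono (hA : 0 < A) (hd : 1 < d) (hx : 0 < x) :
    StrictMonoOn (ncpF A c d x) (Ici (ncpYc A c d x)) := by
  have hyc := ncpYc_pos hA hd hx (c := c)
  apply strictMonoOn_of_deriv_pos (convex_Ici _)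
  · exact ncp_contOn.mono (fun y hy => lt_of_lt_of_le hyc hy)
  · intro y hy
    rw [interior_Ici] at hy
    have hy0 : 0 < y := lt_trans hyc hy
    rw [(ncp_deriv hy0).deriv]
    have hpow : (ncpYc A c d x) ^ (d-1) < y ^ (d-1) :=
      Real.rpow_lt_rpow hyc.le hy (by linarith)
    have hb := ncp_base_pos hA hd hx (c := c)
    rw [ncpYc_pow hA hd hx] at hpow
    have : 1 < A * d * x ^ c * y ^ (d-1) := by
      have h2 := (mul_lt_mul_iff_right₀ hb).mpr hpow
      rwa [mul_inv_cancel₀ hb.ne'] at h2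
    nlinarith
lemma ncp_anti (hA : 0 < A) (hd : 1 < d) (hx : 0 < x) :
    StrictAntiOn (ncpF A c d x) (Ioc 0 (ncpYc A c d x)) := by
  have hyc := ncpYc_pos hA hd hx (c := c)
  apply strictAntiOn_of_deriv_neg (convex_Ioc _ _)
  · exact ncp_contOn.mono (fun y hy => hy.1)
  · intro y hy
    rw [interior_Ioc] at hy
    have hy0 : 0 < y := hy.1
    rw [(ncp_deriv hy0).deriv]
    have hpow : y ^ (d-1) < (ncpYc A c d x) ^ (d-1) :=
      Real.rpow_lt_rpow hy0.le hy.2 (by linarith)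
    have hb := ncp_base_pos hA hd hx (c := c)
    rw [ncpYc_pow hA hd hx] at hpow
    have : A * d * x ^ c * y ^ (d-1) < 1 := by
      have h2 := (mul_lt_mul_iff_right₀ hb).mpr hpow
      rwa [mul_inv_cancel₀ hb.ne'] at h2
    nlinarith

lemma ncp_tendsto (hA : 0 < A) (hd : 1 < d) (hx : 0 < x) :
    Tendsto (ncpF A c d x) atTop atTop := by
  have hC : 0 < A * x ^ c := mul_pos hA (Real.rpow_pos_of_pos hx c)
  have h1 : Tendsto (fun y : ℝ => y ^ (d-1)) atTop atTop :=
    tendsto_rpow_atTop (by linarith)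
  have h2 : Tendsto (fun y : ℝ => A * x ^ c * y ^ (d-1) - 1) atTop atTop :=
    tendsto_atTop_add_const_right _ _ (h1.const_mul_atTop hC)
  have h3 : Tendsto (fun y : ℝ => y * (A * x ^ c * y ^ (d-1) - 1) + (1 - x)) atTop atTop :=
    tendsto_atTop_add_const_right _ _ (tendsto_id.atTop_mul_atTop₀ h2)
  apply h3.congr'
  filter_upwards [eventually_gt_atTop (0:ℝ)] with y hy
  have : y ^ d = y ^ (d-1) * y := by
    have h := (Real.rpow_add hy (d-1) 1).symm
    rw [Real.rpow_one] at h
    norm_num at h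
    exact h.symm
  simp only [ncpF, this]
  ring
end

section
variable {A c d x : ℝ}

/-- existence of the upper root -/
lemma ncp_exists_plus (hA : 0 < A) (hd : 1 < d) (hx : 0 < x)
    (hkey : ncpF A c d x (ncpYc A c d x) ≤ 0) :
    ∃ y, ncpYc A c d x ≤ y ∧ ncpF A c d x y = 0 := by
  have hyc := ncpYc_pos hA hd hx (c := c)
  obtain ⟨Y, hY1, hY2⟩ : ∃ Y, ncpYc A c d x ≤ Y ∧ 0 ≤ ncpF A c d x Y := by
    have h1 := (ncp_tendsto hA hd hx (c := c)).eventually_ge_atTop 0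
    have h2 := eventually_ge_atTop (ncpYc A c d x)
    obtain ⟨Y, hY⟩ := (h2.and h1).exists
    exact ⟨Y, hY.1, hY.2⟩
  have hsub : Icc (ncpYc A c d x) Y ⊆ Ioi 0 := fun y hy => lt_of_lt_of_le hyc hy.1
  have := intermediate_value_Icc hY1 ((ncp_contOn (A:=A) (c:=c) (d:=d) (x:=x)).mono hsub)
  obtain ⟨y, hy, hy0⟩ := this ⟨hkey, hY2⟩
  exact ⟨y, hy.1, hy0⟩

/-- existence of the lower root -/
lemma ncp_exists_minus (hA : 0 < A) (hd : 1 < d) (hx : 0 < x) (hx1 : x < 1)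
    (hkey : ncpF A c d x (ncpYc A c d x) ≤ 0) :
    ∃ y, 0 < y ∧ y ≤ ncpYc A c d x ∧ ncpF A c d x y = 0 := by
  have hyc := ncpYc_pos hA hd hx (c := c)
  set y1 : ℝ := min (ncpYc A c d x) (1 - x) with hy1def
  have hy1pos : 0 < y1 := lt_min hyc (by linarith)
  have hy1le : y1 ≤ ncpYc A c d x := min_le_left _ _
  have hFy1 : 0 ≤ ncpF A c d x y1 := by
    have h1 : y1 ≤ 1 - x := min_le_right _ _
    have h2 : 0 < A * x ^ c * y1 ^ d :=
      mul_pos (mul_pos hA (Real.rpow_pos_of_pos hx c)) (Real.rpow_pos_of_pos hy1pos d)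
    simp only [ncpF]; linarith
  have hsub : Icc y1 (ncpYc A c d x) ⊆ Ioi 0 := fun y hy => lt_of_lt_of_le hy1pos hy.1
  have := intermediate_value_Icc' hy1le ((ncp_contOn (A:=A) (c:=c) (d:=d) (x:=x)).mono hsub)
  obtain ⟨y, hy, hy0⟩ := this ⟨hkey, hFy1⟩
  exact ⟨y, lt_of_lt_of_le hy1pos hy.1, hy.2, hy0⟩

/-- the key inequality -/
lemma ncp_key (hA : 0 < A) (hc : 1 < c) (hd : 1 < d)
    (hyc0 : ncpYc A c d (c / (c + d - 1)) = d / (c + d - 1)) (hx : 0 < x) :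
    ncpF A c d x (ncpYc A c d x) ≤ 0 := by
  set s : ℝ := c + d - 1 with hs
  have hspos : 0 < s := by simp only [hs]; linarith
  set x0 : ℝ := c / s with hx0
  set y0 : ℝ := d / s with hy0
  have hx0pos : 0 < x0 := div_pos (by linarith) hspos
  have hy0pos : 0 < y0 := div_pos (by linarith) hspos
  have hd1 : (0:ℝ) < d - 1 := by linarith
  set γ : ℝ := c * (d-1)⁻¹ with hγ
  have hγpos : 0 < γ := mul_pos (by linarith) (by positivity)
  -- Step 1 : ncpYc A c d x = y0 * (x/x0) ^ (-γ)
  have step1 : ncpYc A c d x = y0 * (x / x0) ^ (-γ) := by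
    have hxx0 : (0:ℝ) < x / x0 := div_pos hx hx0pos
    have hsplit : A * d * x ^ c = (A * d * x0 ^ c) * (x / x0) ^ c := by
      rw [Real.div_rpow hx.le hx0pos.le]
      field_simp [(Real.rpow_pos_of_pos hx0pos c).ne']
    rw [ncpYc, hsplit, Real.mul_rpow (ncp_base_pos hA hd hx0pos).le (Real.rpow_pos_of_pos hxx0 c).le]
    rw [← ncpYc, hyc0, ← Real.rpow_mul hxx0.le]
    rw [show c * -(d-1)⁻¹ = -γ by ring]
  -- Step 2 and conclusion
  rw [ncpF_at_yc hA hd hx, step1]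
  have hcore := ncp_core γ (x / x0) (div_pos hx hx0pos) hγpos.le
  have hB : 0 ≤ (1 - 1/d) * y0 := by
    apply mul_nonneg _ hy0pos.le
    have : 1/d < 1 := by rw [div_lt_one (by linarith)]; linarith
    linarith
  have hchain : (1 - 1/d) * y0 * (1 - γ * (x/x0 - 1)) ≤ (1 - 1/d) * y0 * ((x/x0) ^ (-γ)) :=
    mul_le_mul_of_nonneg_left hcore hB
  have halg : 1 - x - (1 - 1/d) * y0 * (1 - γ * (x/x0 - 1)) = 0 := by
    simp only [hy0, hγ, hx0, hs]
    have h1 : (c:ℝ) ≠ 0 := by linarith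
    have h2 : (d:ℝ) ≠ 0 := by linarith
    have h3 : (d:ℝ) - 1 ≠ 0 := by linarith
    have h4 : (c:ℝ) + d - 1 ≠ 0 := by linarith
    field_simp
    ring
  nlinarith [hchain]
end

section
variable {A c d : ℝ}

lemma ncpYc_contAt (hA : 0 < A) (hd : 1 < d) {x0 : ℝ} (hx0 : 0 < x0) :
    ContinuousAt (ncpYc A c d) x0 := by
  have h1 : ContinuousAt (fun x : ℝ => A * d * x ^ c) x0 :=
    continuousAt_const.mul (Real.continuousAt_rpow_const x0 c (Or.inl hx0.ne'))
  show ContinuousAt (fun x : ℝ => (A * d * x ^ c) ^ (-(d-1)⁻¹)) x0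
  exact h1.rpow_const (Or.inl (ncp_base_pos hA hd hx0).ne')

lemma ncpF_contAt_x (y : ℝ) {x0 : ℝ} (hx0 : 0 < x0) :
    ContinuousAt (fun x : ℝ => ncpF A c d x y) x0 := by
  have h1 : ContinuousAt (fun x : ℝ => x ^ c) x0 :=
    Real.continuousAt_rpow_const x0 c (Or.inl hx0.ne')
  show ContinuousAt (fun x : ℝ => 1 - x - y + A * x ^ c * y ^ d) x0
  exact ((continuousAt_const.sub continuousAt_id).sub continuousAt_const).add
    ((continuousAt_const.mul h1).mul continuousAt_const)

/-- continuity of the upper branch -/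
lemma ncp_vp_cont (hA : 0 < A) (hd : 1 < d) (vp : ℝ → ℝ)
    (hvp : ∀ x : ℝ, 0 < x → ncpYc A c d x ≤ vp x ∧ ncpF A c d x (vp x) = 0)
    {x0 : ℝ} (hx0 : 0 < x0) : ContinuousAt vp x0 := by
  have hyc0 : ncpYc A c d x0 ≤ vp x0 := (hvp x0 hx0).1
  have hF0 : ncpF A c d x0 (vp x0) = 0 := (hvp x0 hx0).2
  rw [ContinuousAt, Metric.tendsto_nhds]
  intro ε hε
  have hupper : ∀ᶠ x in 𝓝 x0, vp x < vp x0 + ε := by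
    have hFpos : 0 < ncpF A c d x0 (vp x0 + ε) := by
      have := ncp_mono hA hd hx0 (mem_Ici.mpr hyc0)
        (mem_Ici.mpr (by linarith : ncpYc A c d x0 ≤ vp x0 + ε)) (by linarith)
      rwa [hF0] at this
    have hev1 := (ncpF_contAt_x (A:=A) (c:=c) (d:=d) (vp x0 + ε) hx0).eventually
      (eventually_gt_nhds hFpos)
    have hlt : ncpYc A c d x0 < vp x0 + ε := by linarith
    have hev2 := (ncpYc_contAt hA hd hx0 (c:=c)).eventually (eventually_lt_nhds hlt)
    filter_upwards [eventually_gt_nhds hx0, hev1, hev2] with x hx hF hyc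
    by_contra hcon
    push_neg at hcon
    have h1 := (hvp x hx).1
    have h2 := (hvp x hx).2
    rcases eq_or_lt_of_le hcon with he | hlt
    · rw [he] at hF; rw [h2] at hF; linarith
    · have := ncp_mono hA hd hx (mem_Ici.mpr hyc.le) (mem_Ici.mpr h1) hlt
      rw [h2] at this; linarith
  have hlower : ∀ᶠ x in 𝓝 x0, vp x0 - ε < vp x := by
    by_cases hcase : vp x0 - ε < ncpYc A c d x0
    · have hev2 := (ncpYc_contAt hA hd hx0 (c:=c)).eventually (eventually_gt_nhds hcase)
      filter_upwards [eventually_gt_nhds hx0, hev2] with x hx h2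
      exact lt_of_lt_of_le h2 (hvp x hx).1
    · push_neg at hcase
      have hFneg : ncpF A c d x0 (vp x0 - ε) < 0 := by
        have := ncp_mono hA hd hx0 (mem_Ici.mpr hcase) (mem_Ici.mpr hyc0)
          (by linarith : vp x0 - ε < vp x0)
        rwa [hF0] at this
      have hev1 := (ncpF_contAt_x (A:=A) (c:=c) (d:=d) (vp x0 - ε) hx0).eventually
        (eventually_lt_nhds hFneg)
      filter_upwards [eventually_gt_nhds hx0, hev1] with x hx hF
      by_contra hcon
      push_neg at hcon
      have h1 := (hvp x hx).1
      have h2 := (hvp x hx).2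
      rcases eq_or_lt_of_le hcon with he | hlt
      · rw [← he, h2] at hF; linarith
      · have := ncp_mono hA hd hx (mem_Ici.mpr h1) (mem_Ici.mpr (le_trans h1 hcon)) hlt
        rw [h2] at this; linarith
  filter_upwards [hupper, hlower] with x h1 h2
  rw [Real.dist_eq, abs_sub_lt_iff]
  constructor <;> linarith

/-- continuity of the lower branch -/
lemma ncp_vm_cont (hA : 0 < A) (hd : 1 < d) (vm : ℝ → ℝ)
    (hvm : ∀ x : ℝ, 0 < x → x < 1 →
      0 < vm x ∧ vm x ≤ ncpYc A c d x ∧ ncpF A c d x (vm x) = 0)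
    {x0 : ℝ} (hx0 : 0 < x0) (hx01 : x0 < 1) : ContinuousAt vm x0 := by
  obtain ⟨hpos0, hyc0, hF0⟩ := hvm x0 hx0 hx01
  rw [ContinuousAt, Metric.tendsto_nhds]
  intro ε hε
  have hevx : ∀ᶠ x in 𝓝 x0, 0 < x ∧ x < 1 :=
    (eventually_gt_nhds hx0).and (eventually_lt_nhds hx01)
  have hupper : ∀ᶠ x in 𝓝 x0, vm x < vm x0 + ε := by
    by_cases hcase : ncpYc A c d x0 < vm x0 + ε
    · have hev2 := (ncpYc_contAt hA hd hx0 (c:=c)).eventually (eventually_lt_nhds hcase)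
      filter_upwards [hevx, hev2] with x hx h2
      exact lt_of_le_of_lt (hvm x hx.1 hx.2).2.1 h2
    · push_neg at hcase
      have hFneg : ncpF A c d x0 (vm x0 + ε) < 0 := by
        have := ncp_anti hA hd hx0 (mem_Ioc.mpr ⟨hpos0, hyc0⟩)
          (mem_Ioc.mpr ⟨by linarith, hcase⟩) (by linarith)
        rwa [hF0] at this
      have hev1 := (ncpF_contAt_x (A:=A) (c:=c) (d:=d) (vm x0 + ε) hx0).eventually
        (eventually_lt_nhds hFneg)
      filter_upwards [hevx, hev1] with x hx hF
      by_contra hcon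
      push_neg at hcon
      obtain ⟨h0, h1, h2⟩ := hvm x hx.1 hx.2
      rcases eq_or_lt_of_le hcon with he | hlt
      · rw [he, h2] at hF; linarith
      · have := ncp_anti hA hd hx.1 (mem_Ioc.mpr ⟨by linarith, le_trans hcon h1⟩)
          (mem_Ioc.mpr ⟨h0, h1⟩) hlt
        rw [h2] at this; linarith
  have hlower : ∀ᶠ x in 𝓝 x0, vm x0 - ε < vm x := by
    by_cases hcase : vm x0 - ε ≤ 0
    · filter_upwards [hevx] with x hx
      exact lt_of_le_of_lt hcase (hvm x hx.1 hx.2).1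
    · push_neg at hcase
      have hFpos : 0 < ncpF A c d x0 (vm x0 - ε) := by
        have := ncp_anti hA hd hx0 (mem_Ioc.mpr ⟨hcase, by linarith⟩)
          (mem_Ioc.mpr ⟨hpos0, hyc0⟩) (by linarith)
        rwa [hF0] at this
      have hev1 := (ncpF_contAt_x (A:=A) (c:=c) (d:=d) (vm x0 - ε) hx0).eventually
        (eventually_gt_nhds hFpos)
      have hlt : vm x0 - ε < ncpYc A c d x0 := by linarith
      have hev2 := (ncpYc_contAt hA hd hx0 (c:=c)).eventually (eventually_gt_nhds hlt)
      filter_upwards [hevx, hev1, hev2] with x hx hF hyc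
      by_contra hcon
      push_neg at hcon
      obtain ⟨h0, h1, h2⟩ := hvm x hx.1 hx.2
      rcases eq_or_lt_of_le hcon with he | hlt'
      · rw [← he, h2] at hF; linarith
      · have := ncp_anti hA hd hx.1 (mem_Ioc.mpr ⟨h0, h1⟩)
          (mem_Ioc.mpr ⟨hcase, hyc.le⟩) hlt'
        rw [h2] at this; linarith
  filter_upwards [hupper, hlower] with x h1 h2
  rw [Real.dist_eq, abs_sub_lt_iff]
  constructor <;> linarith
end

section
variable {A c d x y : ℝ}

/-- for `x ≥ 1` there is no root below the critical height -/
lemma ncp_no_low_root (hA : 0 < A) (hd : 1 < d) (hx1 : 1 ≤ x) (hy : 0 < y)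
    (hylt : y ≤ ncpYc A c d x) (hF : ncpF A c d x y = 0) : False := by
  have hx : 0 < x := lt_of_lt_of_le one_pos hx1
  have hxc : 0 < A * x ^ c := mul_pos hA (Real.rpow_pos_of_pos hx c)
  set B : ℝ := (A * x ^ c) ^ (-(d-1)⁻¹) with hB
  have hBpos : 0 < B := Real.rpow_pos_of_pos hxc _
  set w : ℝ := min (y/2) (B/2) with hw
  have hw0 : 0 < w := lt_min (by linarith) (by linarith)
  have hwy : w < y := lt_of_le_of_lt (min_le_left _ _) (by linarith)
  have hwB : w < B := lt_of_le_of_lt (min_le_right _ _) (by linarith)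
  have hd1 : d - 1 ≠ 0 := by linarith
  have hBpow : B ^ (d-1) = (A * x ^ c)⁻¹ := by
    rw [hB, ← Real.rpow_mul hxc.le, show -(d-1)⁻¹ * (d-1) = -1 by field_simp]
    exact Real.rpow_neg_one _
  have hwpow : w ^ (d-1) < (A * x ^ c)⁻¹ := by
    rw [← hBpow]; exact Real.rpow_lt_rpow hw0.le hwB (by linarith)
  have hlt1 : A * x ^ c * w ^ (d-1) < 1 := by
    have h2 := (mul_lt_mul_iff_right₀ hxc).mpr hwpow
    rwa [mul_inv_cancel₀ hxc.ne'] at h2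
  have hFw : ncpF A c d x w < 0 := by
    have hsplit : w ^ d = w ^ (d-1) * w := ncp_rpow_split hw0
    simp only [ncpF, hsplit]
    nlinarith
  have := ncp_anti hA hd hx (mem_Ioc.mpr ⟨hw0, le_trans hwy.le hylt⟩)
    (mem_Ioc.mpr ⟨hy, hylt⟩) hwy
  rw [hF] at this
  linarith
end

/-- Let `f(x₁,x₂) = 1 - x₁ - x₂ + A x₁^c x₂^d` with `A > 0` and `c, d > 1`.
If `p` is a critical point of `f` in the positive quadrant with `f p = 0`, and
the zero set `Z` of `f` in the positive quadrant contains a point other than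
`p`, then `Z` is connected and non-compact. -/
theorem normal_form_critical_point_connected
    (A cc dd : ℝ) (hA : 0 < A) (hcc : 1 < cc) (hdd : 1 < dd)
    (f : ℝ × ℝ → ℝ)
    (hf : ∀ x : ℝ × ℝ, f x = 1 - x.1 - x.2 + A * x.1 ^ cc * x.2 ^ dd)
    (Z : Set (ℝ × ℝ)) (hZ : Z = {x : ℝ × ℝ | 0 < x.1 ∧ 0 < x.2 ∧ f x = 0})
    (p : ℝ × ℝ) (hp : p ∈ Z) (hcrit : fderiv ℝ f p = 0)
    (hne : (Z \ {p}).Nonempty) :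
    IsConnected Z ∧ ¬ IsCompact Z := by
  -- basic facts about p
  rw [hZ] at hp
  obtain ⟨hp1, hp2, hpf⟩ := hp
  have hfF : ∀ a b : ℝ, f (a, b) = ncpF A cc dd a b := fun a b => by
    rw [hf]; simp only [ncpF]
  -- compute the partial derivatives
  have hfe : f = fun x : ℝ × ℝ => 1 - x.1 - x.2 + A * x.1 ^ cc * x.2 ^ dd := funext hf
  rw [hfe] at hcrit
  have hpartials : A * cc * p.1 ^ (cc-1) * p.2 ^ dd = 1 ∧
      A * dd * p.1 ^ cc * p.2 ^ (dd-1) = 1 := by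
    have hfst : HasFDerivAt (fun x : ℝ × ℝ => x.1) (ContinuousLinearMap.fst ℝ ℝ ℝ) p :=
      hasFDerivAt_fst
    have hsnd : HasFDerivAt (fun x : ℝ × ℝ => x.2) (ContinuousLinearMap.snd ℝ ℝ ℝ) p :=
      hasFDerivAt_snd
    have h1 : HasFDerivAt (fun x : ℝ × ℝ => x.1 ^ cc)
        ((cc * p.1 ^ (cc - 1)) • (ContinuousLinearMap.fst ℝ ℝ ℝ)) p :=
      hfst.rpow_const (Or.inl hp1.ne')
    have h2 : HasFDerivAt (fun x : ℝ × ℝ => x.2 ^ dd)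
        ((dd * p.2 ^ (dd - 1)) • (ContinuousLinearMap.snd ℝ ℝ ℝ)) p :=
      hsnd.rpow_const (Or.inl hp2.ne')
    have h4 := ((hasFDerivAt_const (1:ℝ) p).sub hfst).sub hsnd
    have h5 := h4.add ((h1.const_mul A).mul h2)
    have h6 : fderiv ℝ (fun x : ℝ × ℝ => 1 - x.1 - x.2 + A * x.1 ^ cc * x.2 ^ dd) p = _ :=
      h5.fderiv
    rw [hcrit] at h6
    have e1 := congrArg (fun L => L (1, 0)) h6.symm
    have e2 := congrArg (fun L => L (0, 1)) h6.symm
    simp [ContinuousLinearMap.add_apply, ContinuousLinearMap.smul_apply] at e1 e2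
    constructor
    · nlinarith [e1]
    · nlinarith [e2]
  obtain ⟨e1, e2⟩ := hpartials
  -- determine p
  set s : ℝ := cc + dd - 1 with hs
  have hspos : 0 < s := by simp only [hs]; linarith
  have e0 : 1 - p.1 - p.2 + A * p.1 ^ cc * p.2 ^ dd = 0 := by
    rw [hf] at hpf; exact hpf
  have h1' : cc * (A * p.1 ^ cc * p.2 ^ dd) = p.1 := by
    rw [ncp_rpow_split hp1 (d := cc)]
    linear_combination p.1 * e1
  have h2' : dd * (A * p.1 ^ cc * p.2 ^ dd) = p.2 := by
    rw [ncp_rpow_split hp2 (d := dd)]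
    linear_combination p.2 * e2
  have hT : A * p.1 ^ cc * p.2 ^ dd = 1 / s := by
    rw [eq_div_iff hspos.ne']
    simp only [hs]
    linear_combination h1' + h2' - e0
  have hpx : p.1 = cc / s := by rw [← h1', hT]; ring
  have hpy : p.2 = dd / s := by rw [← h2', hT]; ring
  have hx0pos : 0 < cc / s := div_pos (by linarith) hspos
  have hy0pos : 0 < dd / s := div_pos (by linarith) hspos
  have hx0lt1 : cc / s < 1 := by
    rw [div_lt_one hspos]; simp only [hs]; linarith
  -- the critical height at cc/s is dd/s
  have hyc0 : ncpYc A cc dd (cc / s) = dd / s := by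
    rw [hpx, hpy] at e2
    have hb := ncp_base_pos hA hdd hx0pos (c := cc)
    have hpow : ((dd:ℝ) / s) ^ (dd - 1) = (A * dd * (cc / s) ^ cc)⁻¹ :=
      (inv_eq_of_mul_eq_one_right e2).symm
    apply Real.rpow_left_injOn (x := dd - 1) (by intro h; linarith)
      (mem_setOf.mpr (ncpYc_pos hA hdd hx0pos).le) (mem_setOf.mpr hy0pos.le)
    show (ncpYc A cc dd (cc/s)) ^ (dd-1) = ((dd:ℝ)/s) ^ (dd-1)
    rw [ncpYc_pow hA hdd hx0pos, hpow]
  -- the key inequality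
  have hkey : ∀ x : ℝ, 0 < x → ncpF A cc dd x (ncpYc A cc dd x) ≤ 0 :=
    fun x hx => ncp_key hA hcc hdd hyc0 hx
  -- choose branch functions
  have hex_p : ∀ x : ℝ, ∃ y, 0 < x → ncpYc A cc dd x ≤ y ∧ ncpF A cc dd x y = 0 := by
    intro x
    by_cases hx : 0 < x
    · obtain ⟨y, hy⟩ := ncp_exists_plus hA hdd hx (hkey x hx)
      exact ⟨y, fun _ => hy⟩
    · exact ⟨0, fun h => absurd h hx⟩
  choose vp hvp using hex_p
  have hex_m : ∀ x : ℝ, ∃ y, 0 < x → x < 1 →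
      0 < y ∧ y ≤ ncpYc A cc dd x ∧ ncpF A cc dd x y = 0 := by
    intro x
    by_cases hx : 0 < x
    · by_cases hx1 : x < 1
      · obtain ⟨y, hy⟩ := ncp_exists_minus hA hdd hx hx1 (hkey x hx)
        exact ⟨y, fun _ _ => hy⟩
      · exact ⟨0, fun _ h => absurd h hx1⟩
    · exact ⟨0, fun h => absurd h hx⟩
  choose vm hvm using hex_m
  -- the two graphs
  set Γp : Set (ℝ × ℝ) := (fun x => (x, vp x)) '' (Ioi 0) with hΓp
  set Γm : Set (ℝ × ℝ) := (fun x => (x, vm x)) '' (Ioo 0 1) with hΓm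
  -- Z is the union of the two graphs
  have hZeq : Z = Γm ∪ Γp := by
    rw [hZ]
    ext q
    obtain ⟨a, b⟩ := q
    simp only [mem_setOf_eq, mem_union, hΓm, hΓp, mem_image, mem_Ioi, mem_Ioo]
    constructor
    · rintro ⟨ha, hb, hab⟩
      rw [hfF] at hab
      by_cases hcb : ncpYc A cc dd a ≤ b
      · right
        refine ⟨a, ha, ?_⟩
        have hb_eq : b = vp a := by
          apply (ncp_mono hA hdd ha).injOn (mem_Ici.mpr hcb) (mem_Ici.mpr (hvp a ha).1)
          rw [hab, (hvp a ha).2]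
        rw [hb_eq]
      · push_neg at hcb
        by_cases ha1 : a < 1
        · left
          refine ⟨a, ⟨ha, ha1⟩, ?_⟩
          have hb_eq : b = vm a := by
            apply (ncp_anti hA hdd ha).injOn (mem_Ioc.mpr ⟨hb, hcb.le⟩)
              (mem_Ioc.mpr ⟨(hvm a ha ha1).1, (hvm a ha ha1).2.1⟩)
            rw [hab, (hvm a ha ha1).2.2]
          rw [hb_eq]
        · push_neg at ha1
          exact (ncp_no_low_root hA hdd ha1 hb hcb.le hab).elim
    · rintro (⟨x, ⟨hx, hx1⟩, hq⟩ | ⟨x, hx, hq⟩)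
      · obtain ⟨h0, h1, h2⟩ := hvm x hx hx1
        have hq2 : (x, vm x) = (a, b) := hq
        injection hq2 with hqa hqb
        subst hqa; subst hqb
        exact ⟨hx, h0, by rw [hfF]; exact h2⟩
      · obtain ⟨h1, h2⟩ := hvp x hx
        have hq2 : (x, vp x) = (a, b) := hq
        injection hq2 with hqa hqb
        subst hqa; subst hqb
        exact ⟨hx, lt_of_lt_of_le (ncpYc_pos hA hdd hx) h1, by rw [hfF]; exact h2⟩
  -- p belongs to both graphs
  have hppair : p = (cc / s, dd / s) := by
    rw [← hpx, ← hpy]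
  have hF00 : ncpF A cc dd (cc / s) (dd / s) = 0 := by
    rw [← hfF, ← hppair, hfe]
    rw [hfe] at hpf
    exact hpf
  have hvp0 : vp (cc / s) = dd / s := by
    symm
    apply (ncp_mono hA hdd hx0pos).injOn (mem_Ici.mpr hyc0.le)
      (mem_Ici.mpr (hvp _ hx0pos).1)
    rw [hF00, (hvp _ hx0pos).2]
  have hvm0 : vm (cc / s) = dd / s := by
    symm
    apply (ncp_anti hA hdd hx0pos).injOn (mem_Ioc.mpr ⟨hy0pos, le_of_eq hyc0.symm⟩)
      (mem_Ioc.mpr ⟨(hvm _ hx0pos hx0lt1).1, (hvm _ hx0pos hx0lt1).2.1⟩)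
    rw [hF00, (hvm _ hx0pos hx0lt1).2.2]
  have hp_in_m : p ∈ Γm := by
    rw [hΓm, hppair]
    exact ⟨cc / s, mem_Ioo.mpr ⟨hx0pos, hx0lt1⟩,
      by show ((cc/s : ℝ), vm (cc/s)) = ((cc/s : ℝ), (dd/s : ℝ)); rw [hvm0]⟩
  have hp_in_p : p ∈ Γp := by
    rw [hΓp, hppair]
    exact ⟨cc / s, mem_Ioi.mpr hx0pos,
      by show ((cc/s : ℝ), vp (cc/s)) = ((cc/s : ℝ), (dd/s : ℝ)); rw [hvp0]⟩
  constructor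
  · -- connectedness
    rw [hZeq]
    have hconn_m : IsConnected Γm := by
      apply (isConnected_Ioo (show (0:ℝ) < 1 by norm_num)).image
      apply ContinuousOn.prodMk continuousOn_id
      intro x hx
      exact (ncp_vm_cont hA hdd vm (fun x h1 h2 => hvm x h1 h2) hx.1 hx.2).continuousWithinAt
    have hconn_p : IsConnected Γp := by
      apply isConnected_Ioi.image
      apply ContinuousOn.prodMk continuousOn_id
      intro x hx
      exact (ncp_vp_cont hA hdd vp (fun x h1 => hvp x h1) hx).continuousWithinAt
    exact IsConnected.union ⟨p, hp_in_m, hp_in_p⟩ hconn_m hconn_p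
  · -- non-compactness
    intro hK
    obtain ⟨C, hC⟩ := isBounded_iff_forall_norm_le.mp hK.isBounded
    set x1 : ℝ := max (C + 1) 1 with hx1def
    have hx1pos : 0 < x1 := lt_of_lt_of_le one_pos (le_max_right _ _)
    have hmem : (x1, vp x1) ∈ Z := by
      rw [hZ]
      exact ⟨hx1pos, lt_of_lt_of_le (ncpYc_pos hA hdd hx1pos) (hvp x1 hx1pos).1,
        by rw [hfF]; exact (hvp x1 hx1pos).2⟩
    have hnorm := hC _ hmem
    have h1 : x1 ≤ ‖(x1, vp x1)‖ := by
      calc x1 = |x1| := (abs_of_pos hx1pos).symm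
        _ = ‖x1‖ := rfl
        _ ≤ ‖(x1, vp x1)‖ := by rw [Prod.norm_def]; exact le_max_left _ _
    have h2 : C + 1 ≤ x1 := le_max_left _ _
    linarith
end

section
/- The zero set of f(x₁, x₂) = x₂² − 4x₁³x₂ + x₁⁸ + 3x₁⁴ in the positive quadrant is exactly {(x₁, 2x₁³ ± x₁² √(1 − (x₁² − 2)²)) : 1 ≤ x₁ ≤ √3}, and this set is compact and nonempty. -/
/-!
Completing the square in `x₂` gives
`f(x₁, x₂) = (x₂ - 2x₁³)² - x₁⁴ (1 - (x₁² - 2)²)`,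
so on `x₁ > 0` the zero set consists of the two graphs `x₂ = 2x₁³ ± x₁² √(1 - (x₁² - 2)²)`
over the interval where the discriminant `1 - (x₁² - 2)²` is nonnegative, namely `1 ≤ x₁ ≤ √3`.
Both graphs lie in `x₂ > 0` because the square root is at most `1 ≤ x₁ < 2x₁`.
Compactness follows since the graphs are continuous images of a compact interval.
-/

open Real Set

lemma poly_eq_sq_sub_mul_discr (a b : ℝ) :
    b ^ 2 - 4 * a ^ 3 * b + a ^ 8 + 3 * a ^ 4
      = (b - 2 * a ^ 3) ^ 2 - (a ^ 2) ^ 2 * (1 - (a ^ 2 - 2) ^ 2) := by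
  ring

lemma sq_eq_sq_mul_iff {y c D : ℝ} (hc : c ≠ 0) :
    y ^ 2 = c ^ 2 * D ↔ 0 ≤ D ∧ (y = c * √D ∨ y = -(c * √D)) := by
  constructor
  · intro h
    have hD : 0 ≤ D := by
      have : D = (y / c) ^ 2 := by field_simp; linarith
      exact this ▸ sq_nonneg _
    refine ⟨hD, sq_eq_sq_iff_eq_or_eq_neg.mp ?_⟩
    rw [h, mul_pow, sq_sqrt hD]
  · rintro ⟨hD, h | h⟩ <;> rw [h] <;> simp only [neg_sq, mul_pow, sq_sqrt hD]

lemma one_sub_sq_sq_sub_two_nonneg_iff {a : ℝ} (ha : 0 < a) :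
    0 ≤ 1 - (a ^ 2 - 2) ^ 2 ↔ 1 ≤ a ∧ a ≤ √3 := by
  rw [sub_nonneg, sq_le_one_iff_abs_le_one, abs_le, Real.le_sqrt ha.le (by norm_num)]
  constructor <;> rintro ⟨h₁, h₂⟩ <;> constructor <;> nlinarith

lemma two_mul_pow_three_sub_pos {a : ℝ} (ha : 1 ≤ a) :
    0 < 2 * a ^ 3 - a ^ 2 * √(1 - (a ^ 2 - 2) ^ 2) := by
  have hroot : √(1 - (a ^ 2 - 2) ^ 2) ≤ 1 := Real.sqrt_le_one.mpr (by nlinarith)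
  have : 0 < a ^ 2 * (2 * a - √(1 - (a ^ 2 - 2) ^ 2)) := by
    apply mul_pos <;> nlinarith
  linarith

lemma zero_iff_mem_graphs {a b : ℝ} (ha : 0 < a) :
    (0 < b ∧ b ^ 2 - 4 * a ^ 3 * b + a ^ 8 + 3 * a ^ 4 = 0) ↔
      1 ≤ a ∧ a ≤ √3 ∧ (b = 2 * a ^ 3 + a ^ 2 * √(1 - (a ^ 2 - 2) ^ 2) ∨
        b = 2 * a ^ 3 - a ^ 2 * √(1 - (a ^ 2 - 2) ^ 2)) := by
  rw [poly_eq_sq_sub_mul_discr, sub_eq_zero, sq_eq_sq_mul_iff (by positivity),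
    one_sub_sq_sq_sub_two_nonneg_iff ha, sub_eq_iff_eq_add', sub_eq_iff_eq_add',
    ← sub_eq_add_neg, and_assoc]
  constructor
  · exact fun ⟨_, h⟩ ↦ h
  · rintro ⟨ha₁, ha₃, hb⟩
    refine ⟨?_, ha₁, ha₃, hb⟩
    rcases hb with rfl | rfl
    · positivity
    · exact two_mul_pow_three_sub_pos ha₁

lemma isCompact_union_graphs {f g : ℝ → ℝ} (hf : Continuous f) (hg : Continuous g) (a b : ℝ) :
    IsCompact {p : ℝ × ℝ | ∃ x, a ≤ x ∧ x ≤ b ∧ (p = (x, f x) ∨ p = (x, g x))} := by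
  have : {p : ℝ × ℝ | ∃ x, a ≤ x ∧ x ≤ b ∧ (p = (x, f x) ∨ p = (x, g x))}
      = (fun x ↦ (x, f x)) '' Icc a b ∪ (fun x ↦ (x, g x)) '' Icc a b := by
    ext p
    simp only [mem_ofPred_eq, mem_union, mem_image, mem_Icc]
    grind
  rw [this]
  exact (isCompact_Icc.image (by fun_prop)).union (isCompact_Icc.image (by fun_prop))

lemma zeroSet_eq_graphs :
    {x : ℝ × ℝ | 0 < x.1 ∧ 0 < x.2 ∧ x.2 ^ 2 - 4 * x.1 ^ 3 * x.2 + x.1 ^ 8 + 3 * x.1 ^ 4 = 0}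
      = {p : ℝ × ℝ | ∃ x₁ : ℝ, 1 ≤ x₁ ∧ x₁ ≤ √3 ∧
          (p = (x₁, 2 * x₁ ^ 3 + x₁ ^ 2 * √(1 - (x₁ ^ 2 - 2) ^ 2)) ∨
           p = (x₁, 2 * x₁ ^ 3 - x₁ ^ 2 * √(1 - (x₁ ^ 2 - 2) ^ 2)))} := by
  ext ⟨a, b⟩
  simp only [mem_ofPred_eq, Prod.mk.injEq]
  constructor
  · rintro ⟨ha, hb⟩
    exact ⟨a, by simpa using (zero_iff_mem_graphs ha).mp hb⟩
  · rintro ⟨x₁, h₁, h₃, ⟨rfl, hb⟩ | ⟨rfl, hb⟩⟩ <;>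
      exact ⟨by positivity, (zero_iff_mem_graphs (by positivity)).mpr ⟨h₁, h₃, by tauto⟩⟩

/-- The zero set of `f(x₁,x₂) = x₂² - 4x₁³x₂ + x₁⁸ + 3x₁⁴` in the positive
quadrant is exactly `{(x₁, 2x₁³ ± x₁²√(1-(x₁²-2)²)) : 1 ≤ x₁ ≤ √3}`, and this
set is compact and nonempty. -/
theorem explicit_compact_zero_set :
    {x : ℝ × ℝ | 0 < x.1 ∧ 0 < x.2 ∧
        x.2 ^ 2 - 4 * x.1 ^ 3 * x.2 + x.1 ^ 8 + 3 * x.1 ^ 4 = 0}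
      = {p : ℝ × ℝ | ∃ x₁ : ℝ, 1 ≤ x₁ ∧ x₁ ≤ Real.sqrt 3 ∧
          (p = (x₁, 2 * x₁ ^ 3 + x₁ ^ 2 * Real.sqrt (1 - (x₁ ^ 2 - 2) ^ 2)) ∨
           p = (x₁, 2 * x₁ ^ 3 - x₁ ^ 2 * Real.sqrt (1 - (x₁ ^ 2 - 2) ^ 2)))} ∧
    IsCompact {x : ℝ × ℝ | 0 < x.1 ∧ 0 < x.2 ∧
        x.2 ^ 2 - 4 * x.1 ^ 3 * x.2 + x.1 ^ 8 + 3 * x.1 ^ 4 = 0} ∧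
    {x : ℝ × ℝ | 0 < x.1 ∧ 0 < x.2 ∧
        x.2 ^ 2 - 4 * x.1 ^ 3 * x.2 + x.1 ^ 8 + 3 * x.1 ^ 4 = 0}.Nonempty := by
  refine ⟨zeroSet_eq_graphs, ?_, (1, 2), by norm_num⟩
  rw [zeroSet_eq_graphs]
  exact isCompact_union_graphs (by fun_prop) (by fun_prop) 1 √3
end

section
/- Suppose Γ ⊂ ℝ_{>0}^2 is a compact connected component of the zero set of an m-nomial f, consisting of regular points of f, and p ∈ Int(Γ). Then for every nonzero u ∈ ℝ^2 the curve t ↦ h_{(p,u)}(t) parametrizing {x ∈ ℝ_{>0}^2 : x^u = p^u} meets Γ at parameter values on both sides of the parameter of p. -/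
/-!
Let `C` be the bounded component of `ℝ_{>0}² \ Γ` containing `p`. A vertical (or horizontal)
ray of the quadrant that meets `C` but not `Γ` would lie in `C`, which is impossible since the
ray is unbounded; hence both coordinate projections of `C` lie in those of the compact set `Γ`,
which are compact subsets of `(0, ∞)`. The curve `h_{(p,u)}` is parametrized by one of the
coordinates, so for parameters close to `0` or large enough it leaves `C`; by connectedness
each of the two arcs from `p` to such a point meets `Γ`.
-/

open Set Bornology

theorem IsCompact.exists_notMem_Ioo_zero_and_notMem_Ioi {K : Set ℝ} (hK : IsCompact K)
    (hKpos : K ⊆ Ioi 0) {t : ℝ} (ht : 0 < t) :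
    (∃ a ∈ Ioo 0 t, a ∉ K) ∧ ∃ b ∈ Ioi t, b ∉ K := by
  -- adjoining `t` makes the set nonempty, so that its infimum is attained and positive
  have hKt : IsCompact (insert t K) := hK.insert t
  obtain ⟨M, hM⟩ := hKt.bddAbove
  have hmin_pos : 0 < sInf (insert t K) := by
    rcases hKt.sInf_mem (insert_nonempty t K) with h | h
    · rw [h]; exact ht
    · exact hKpos h
  have hmin_le : sInf (insert t K) ≤ t := csInf_le hKt.bddBelow (mem_insert t K)
  have htM : t ≤ M := hM (mem_insert t K)
  refine ⟨⟨sInf (insert t K) / 2, ⟨by positivity, by linarith⟩, fun h => ?_⟩,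
    ⟨M + 1, by simp only [mem_Ioi]; linarith, fun h => ?_⟩⟩
  · have := csInf_le hKt.bddBelow (mem_insert_of_mem t h)
    linarith
  · have := hM (mem_insert_of_mem t h)
    linarith

section Crossing

variable {X : Type*} [TopologicalSpace X] {S Γ L : Set X} {p : X}

theorem inter_nonempty_of_isPreconnected_of_not_subset_connectedComponentIn
    (hL : IsPreconnected L) (hLS : L ⊆ S) (hpL : p ∈ L)
    (hLC : ¬ L ⊆ connectedComponentIn (S \ Γ) p) : (L ∩ Γ).Nonempty := by
  by_contra hLΓ
  exact hLC <| hL.subset_connectedComponentIn hpL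
    fun x hx => ⟨hLS hx, fun hxΓ => hLΓ ⟨x, hx, hxΓ⟩⟩

theorem inter_nonempty_of_isPreconnected_of_not_isBounded [Bornology X] {q : X}
    (hL : IsPreconnected L) (hLS : L ⊆ S) (hLb : ¬ IsBounded L)
    (hC : IsBounded (connectedComponentIn (S \ Γ) p))
    (hqL : q ∈ L) (hqC : q ∈ connectedComponentIn (S \ Γ) p) : (L ∩ Γ).Nonempty := by
  rw [connectedComponentIn_eq hqC] at hC
  exact inter_nonempty_of_isPreconnected_of_not_subset_connectedComponentIn hL hLS hqL
    fun hsub => hLb (hC.subset hsub)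

theorem exists_apply_mem_of_notMem_connectedComponentIn {Y : Type*}
    [TopologicalSpace Y] {I : Set Y} {γ : Y → X} {t₀ t : Y}
    (hI : IsPreconnected I) (hγ : ContinuousOn γ I) (hγS : MapsTo γ I S)
    (ht₀ : t₀ ∈ I) (hγt₀ : γ t₀ = p) (ht : t ∈ I)
    (hγt : γ t ∉ connectedComponentIn (S \ Γ) p) : ∃ s ∈ I, γ s ∈ Γ := by
  obtain ⟨_, ⟨s, hs, rfl⟩, hsΓ⟩ :=
    inter_nonempty_of_isPreconnected_of_not_subset_connectedComponentIn (hI.image γ hγ)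
      (image_subset_iff.2 hγS) ⟨t₀, ht₀, hγt₀⟩ fun hsub => hγt (hsub ⟨t, ht, rfl⟩)
  exact ⟨s, hs, hsΓ⟩

theorem exists_lt_lt_mem_of_forall_mem_connectedComponentIn_mem_image
    {π : X → ℝ} {γ : ℝ → X} {t₀ : ℝ}
    (hΓ : IsCompact Γ) (hπ : Continuous π) (hπΓ : ∀ x ∈ Γ, 0 < π x)
    (hC : ∀ q ∈ connectedComponentIn (S \ Γ) p, π q ∈ π '' Γ)
    (hγ : ContinuousOn γ (Ioi 0)) (hγS : MapsTo γ (Ioi 0) S) (hπγ : ∀ t > 0, π (γ t) = t)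
    (ht₀ : 0 < t₀) (hγt₀ : γ t₀ = p) (hpΓ : p ∉ Γ) :
    ∃ s₁ s₂ : ℝ, 0 < s₁ ∧ s₁ < t₀ ∧ t₀ < s₂ ∧ γ s₁ ∈ Γ ∧ γ s₂ ∈ Γ := by
  obtain ⟨⟨a, ⟨ha, hat₀⟩, haΓ⟩, ⟨b, hbt₀, hbΓ⟩⟩ :=
    (hΓ.image hπ).exists_notMem_Ioo_zero_and_notMem_Ioi
      (image_subset_iff.2 hπΓ) ht₀
  have hleave : ∀ t > 0, t ∉ π '' Γ → γ t ∉ connectedComponentIn (S \ Γ) p :=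
    fun t ht htΓ hγt => htΓ (hπγ t ht ▸ hC _ hγt)
  have hIcc : ∀ {a b : ℝ}, 0 < a → Icc a b ⊆ Ioi 0 := fun ha _ hx => ha.trans_le hx.1
  obtain ⟨s₁, hs₁, hs₁Γ⟩ := exists_apply_mem_of_notMem_connectedComponentIn
    isPreconnected_Icc (hγ.mono (hIcc ha)) (hγS.mono_left (hIcc ha))
    ⟨hat₀.le, le_rfl⟩ hγt₀ ⟨le_rfl, hat₀.le⟩ (hleave a ha haΓ)
  obtain ⟨s₂, hs₂, hs₂Γ⟩ := exists_apply_mem_of_notMem_connectedComponentIn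
    isPreconnected_Icc (hγ.mono (hIcc ht₀)) (hγS.mono_left (hIcc ht₀))
    ⟨le_rfl, (mem_Ioi.1 hbt₀).le⟩ hγt₀ ⟨(mem_Ioi.1 hbt₀).le, le_rfl⟩
    (hleave b (ht₀.trans hbt₀) hbΓ)
  have hne : ∀ s, γ s ∈ Γ → s ≠ t₀ := by
    rintro s hs rfl
    exact hpΓ (hγt₀ ▸ hs)
  exact ⟨s₁, s₂, ha.trans_le hs₁.1, hs₁.2.lt_of_ne (hne s₁ hs₁Γ),
    hs₂.1.lt_of_ne (hne s₂ hs₂Γ).symm, hs₁Γ, hs₂Γ⟩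

end Crossing

section Quadrant

variable {Γ : Set (ℝ × ℝ)} {p q : ℝ × ℝ}

theorem not_isBounded_singleton_prod_Ioi (a : ℝ) : ¬ IsBounded ({a} ×ˢ Ioi (0 : ℝ)) := by
  rw [isBounded_prod_of_nonempty (s := {a}) (t := Ioi (0 : ℝ)) ⟨(a, 1), rfl, mem_Ioi.2 one_pos⟩]
  exact fun h => not_bddAbove_Ioi 0 h.2.bddAbove

theorem not_isBounded_Ioi_prod_singleton (a : ℝ) : ¬ IsBounded (Ioi (0 : ℝ) ×ˢ {a}) := by
  rw [isBounded_prod_of_nonempty (s := Ioi (0 : ℝ)) (t := {a}) ⟨(1, a), mem_Ioi.2 one_pos, rfl⟩]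
  exact fun h => not_bddAbove_Ioi 0 h.1.bddAbove

theorem fst_mem_image_of_mem_connectedComponentIn_of_isBounded
    (hC : IsBounded (connectedComponentIn ({x : ℝ × ℝ | 0 < x.1 ∧ 0 < x.2} \ Γ) p))
    (hq : q ∈ connectedComponentIn ({x : ℝ × ℝ | 0 < x.1 ∧ 0 < x.2} \ Γ) p) :
    q.1 ∈ Prod.fst '' Γ := by
  have hqQ := (connectedComponentIn_subset _ _ hq).1
  obtain ⟨x, hx, hxΓ⟩ := inter_nonempty_of_isPreconnected_of_not_isBounded
    (L := {q.1} ×ˢ Ioi 0) (S := {x : ℝ × ℝ | 0 < x.1 ∧ 0 < x.2})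
    (isPreconnected_singleton.prod isPreconnected_Ioi)
    (fun x hx => ⟨(mem_singleton_iff.1 hx.1).symm ▸ hqQ.1, hx.2⟩)
    (not_isBounded_singleton_prod_Ioi q.1) hC ⟨rfl, hqQ.2⟩ hq
  exact ⟨x, hxΓ, hx.1⟩

theorem snd_mem_image_of_mem_connectedComponentIn_of_isBounded
    (hC : IsBounded (connectedComponentIn ({x : ℝ × ℝ | 0 < x.1 ∧ 0 < x.2} \ Γ) p))
    (hq : q ∈ connectedComponentIn ({x : ℝ × ℝ | 0 < x.1 ∧ 0 < x.2} \ Γ) p) :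
    q.2 ∈ Prod.snd '' Γ := by
  have hqQ := (connectedComponentIn_subset _ _ hq).1
  obtain ⟨x, hx, hxΓ⟩ := inter_nonempty_of_isPreconnected_of_not_isBounded
    (L := Ioi 0 ×ˢ {q.2}) (S := {x : ℝ × ℝ | 0 < x.1 ∧ 0 < x.2})
    (isPreconnected_Ioi.prod isPreconnected_singleton)
    (fun x hx => ⟨hx.1, (mem_singleton_iff.1 hx.2).symm ▸ hqQ.2⟩)
    (not_isBounded_Ioi_prod_singleton q.2) hC ⟨hqQ.1, rfl⟩ hq
  exact ⟨x, hxΓ, hx.2⟩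

end Quadrant

/-- The curve `h_{(p,u)}` in the case `u.2 ≠ 0`. -/
noncomputable def levelCurve (p u : ℝ × ℝ) (t : ℝ) : ℝ × ℝ :=
  (t, (p.1 ^ u.1 * p.2 ^ u.2) ^ (1 / u.2) * t ^ (-u.1 / u.2))

section LevelCurve

variable {p u : ℝ × ℝ}

theorem levelCurve_fst_self (hp : 0 < p.1 ∧ 0 < p.2) (hu : u.2 ≠ 0) :
    levelCurve p u p.1 = p := by
  refine Prod.ext rfl ?_
  simp only [levelCurve]
  rw [Real.mul_rpow (Real.rpow_pos_of_pos hp.1 _).le (Real.rpow_pos_of_pos hp.2 _).le,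
    ← Real.rpow_mul hp.1.le, ← Real.rpow_mul hp.2.le, mul_one_div_cancel hu, Real.rpow_one,
    mul_right_comm, ← Real.rpow_add hp.1, mul_one_div, neg_div, add_neg_cancel,
    Real.rpow_zero, one_mul]

theorem continuousOn_levelCurve : ContinuousOn (levelCurve p u) (Ioi 0) :=
  continuousOn_id.prodMk <| continuousOn_const.mul <|
    continuousOn_id.rpow_const fun _ ht => Or.inl (ne_of_gt ht)

theorem mapsTo_levelCurve (hp : 0 < p.1 ∧ 0 < p.2) :
    MapsTo (levelCurve p u) (Ioi 0) {x : ℝ × ℝ | 0 < x.1 ∧ 0 < x.2} := fun _ ht =>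
  ⟨ht, mul_pos (Real.rpow_pos_of_pos (mul_pos (Real.rpow_pos_of_pos hp.1 _)
    (Real.rpow_pos_of_pos hp.2 _)) _) (Real.rpow_pos_of_pos ht _)⟩

end LevelCurve

theorem curve_through_interior_meets_compact_component_general
    (f : ℝ × ℝ → ℝ)
    (Z : Set (ℝ × ℝ)) (hZ : Z = {x : ℝ × ℝ | 0 < x.1 ∧ 0 < x.2 ∧ f x = 0})
    (Γ : Set (ℝ × ℝ)) (z : ℝ × ℝ)
    (hΓ : Γ = connectedComponentIn Z z) (hΓc : IsCompact Γ)
    (p : ℝ × ℝ) (hp : 0 < p.1 ∧ 0 < p.2) (hpΓ : p ∉ Γ)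
    -- `p` lies in the bounded component of the complement of `Γ` in the
    -- positive quadrant, i.e. in `Int(Γ)`:
    (hint : Bornology.IsBounded
      (connectedComponentIn ({x : ℝ × ℝ | 0 < x.1 ∧ 0 < x.2} \ Γ) p))
    (u : ℝ × ℝ) :
    (u.2 ≠ 0 → ∃ s₁ s₂ : ℝ, 0 < s₁ ∧ s₁ < p.1 ∧ p.1 < s₂ ∧
      (s₁, (p.1 ^ u.1 * p.2 ^ u.2) ^ (1 / u.2) * s₁ ^ (-u.1 / u.2)) ∈ Γ ∧
      (s₂, (p.1 ^ u.1 * p.2 ^ u.2) ^ (1 / u.2) * s₂ ^ (-u.1 / u.2)) ∈ Γ) ∧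
    (u.2 = 0 → ∃ s₁ s₂ : ℝ, 0 < s₁ ∧ s₁ < p.2 ∧ p.2 < s₂ ∧
      (p.1, s₁) ∈ Γ ∧ (p.1, s₂) ∈ Γ) := by
  have hΓQ : ∀ x ∈ Γ, 0 < x.1 ∧ 0 < x.2 := fun x hx => by
    subst hΓ hZ
    exact (connectedComponentIn_subset _ _ hx).imp id And.left
  refine ⟨fun hu => ?_, fun _ => ?_⟩
  · exact exists_lt_lt_mem_of_forall_mem_connectedComponentIn_mem_image hΓc continuous_fst
      (fun x hx => (hΓQ x hx).1)
      (fun _ hq => fst_mem_image_of_mem_connectedComponentIn_of_isBounded hint hq)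
      continuousOn_levelCurve (mapsTo_levelCurve hp) (fun _ _ => rfl) hp.1
      (levelCurve_fst_self hp hu) hpΓ
  · exact exists_lt_lt_mem_of_forall_mem_connectedComponentIn_mem_image hΓc continuous_snd
      (fun x hx => (hΓQ x hx).2)
      (fun _ hq => snd_mem_image_of_mem_connectedComponentIn_of_isBounded hint hq)
      (continuous_const.prodMk continuous_id).continuousOn (fun _ ht => ⟨hp.1, ht⟩)
      (fun _ _ => rfl) hp.2 rfl hpΓ

/-- Let `Γ` be a compact connected component, consisting of regular points,
of the zero set `Z` of an `m`-nomial `f` in the positive quadrant, and let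
`p` be a point of the bounded component ("interior") of the complement of `Γ`
in the positive quadrant.  Then for every nonzero `u ∈ ℝ²`, the curve
`h_{(p,u)}` parametrizing `{x : x^u = p^u}` meets `Γ` at parameter values on
both sides of the parameter of `p`. -/
theorem curve_through_interior_meets_compact_component (m : ℕ)
    (c : Fin m → ℝ) (a : Fin m → ℝ × ℝ)
    (hc : ∀ i, c i ≠ 0) (ha : Function.Injective a)
    (f : ℝ × ℝ → ℝ)
    (hf : ∀ x : ℝ × ℝ, f x = ∑ i, c i * (x.1 ^ (a i).1 * x.2 ^ (a i).2))
    (Z : Set (ℝ × ℝ)) (hZ : Z = {x : ℝ × ℝ | 0 < x.1 ∧ 0 < x.2 ∧ f x = 0})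
    (Γ : Set (ℝ × ℝ)) (z : ℝ × ℝ) (hz : z ∈ Z)
    (hΓ : Γ = connectedComponentIn Z z) (hΓc : IsCompact Γ)
    (hreg : ∀ q ∈ Γ, fderiv ℝ f q ≠ 0)
    (p : ℝ × ℝ) (hp : 0 < p.1 ∧ 0 < p.2) (hpΓ : p ∉ Γ)
    -- `p` lies in the bounded component of the complement of `Γ` in the
    -- positive quadrant, i.e. in `Int(Γ)`:
    (hint : Bornology.IsBounded
      (connectedComponentIn ({x : ℝ × ℝ | 0 < x.1 ∧ 0 < x.2} \ Γ) p))
    (u : ℝ × ℝ) (hu : u ≠ 0) :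
    (u.2 ≠ 0 → ∃ s₁ s₂ : ℝ, 0 < s₁ ∧ s₁ < p.1 ∧ p.1 < s₂ ∧
      (s₁, (p.1 ^ u.1 * p.2 ^ u.2) ^ (1 / u.2) * s₁ ^ (-u.1 / u.2)) ∈ Γ ∧
      (s₂, (p.1 ^ u.1 * p.2 ^ u.2) ^ (1 / u.2) * s₂ ^ (-u.1 / u.2)) ∈ Γ) ∧
    (u.2 = 0 → ∃ s₁ s₂ : ℝ, 0 < s₁ ∧ s₁ < p.2 ∧ p.2 < s₂ ∧
      (p.1, s₁) ∈ Γ ∧ (p.1, s₂) ∈ Γ) :=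
  curve_through_interior_meets_compact_component_general f Z hZ Γ z hΓ hΓc p hp hpΓ hint u
end

section
/- For all integers i, n, m with m ≥ n+2 and 0 ≤ i ≤ n−1: 2^i · n!/(n−i)! · (n−i+1)^{m−i−1} · 2^{(m−i−1)(m−i−2)/2} ≤ (1/2^i) · (n+1)^{m−1} · 2^{(m−1)(m−2)/2}. -/
/-! Multiplying both sides by `2^i`, the claim says that
`f i = 4^i · n!/(n-i)! · (n-i+1)^(m-i-1) · 2^C(m-i-1, 2)` is at most `f 0`.
Passing from `i` to `i + 1` multiplies `f` by `4 (n-i)^(m-i-1) / ((n-i+1)^(m-i-1) · 2^(m-i-2))`,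
which is at most `1` as soon as `m - i - 2 ≥ 2`, so `f` decreases along `0, 1, …, n - 1`. -/

def fewnomialBound (n m i : ℕ) : ℕ :=
  4 ^ i * n.descFactorial i * (n - i + 1) ^ (m - i - 1) * 2 ^ (m - i - 1).choose 2

lemma four_mul_pow_le_succ_pow_mul_two_pow (a : ℕ) {e : ℕ} (he : 2 ≤ e) :
    4 * a ^ (e + 1) ≤ (a + 1) ^ (e + 1) * 2 ^ e := by
  rw [mul_comm]
  gcongr
  · omega
  · calc 4 = 2 ^ 2 := rfl
      _ ≤ 2 ^ e := Nat.pow_le_pow_right two_pos he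

lemma fewnomialBound_succ_le {n m i : ℕ} (hn : i + 1 ≤ n) (hm : i + 4 ≤ m) :
    fewnomialBound n m (i + 1) ≤ fewnomialBound n m i := by
  obtain ⟨a, rfl⟩ : ∃ a, n = a + i + 1 := ⟨n - i - 1, by omega⟩
  obtain ⟨e, rfl⟩ : ∃ e, m = e + i + 2 := ⟨m - i - 2, by omega⟩
  have he : 2 ≤ e := by omega
  have hdesc : (a + i + 1).descFactorial (i + 1) = (a + 1) * (a + i + 1).descFactorial i := by
    rw [Nat.descFactorial_succ]; congr 1; omega
  have hchoose : (e + 1).choose 2 = e.choose 2 + e := by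
    rw [Nat.choose_succ_succ, Nat.choose_one_right, add_comm]
  unfold fewnomialBound
  rw [hdesc, show a + i + 1 - (i + 1) + 1 = a + 1 by omega, show e + i + 2 - (i + 1) - 1 = e by omega,
    show a + i + 1 - i + 1 = a + 1 + 1 by omega, show e + i + 2 - i - 1 = e + 1 by omega, hchoose]
  calc 4 ^ (i + 1) * ((a + 1) * (a + i + 1).descFactorial i) * (a + 1) ^ e * 2 ^ e.choose 2
      = 4 ^ i * (a + i + 1).descFactorial i * 2 ^ e.choose 2 * (4 * (a + 1) ^ (e + 1)) := by ring
    _ ≤ 4 ^ i * (a + i + 1).descFactorial i * 2 ^ e.choose 2 * ((a + 1 + 1) ^ (e + 1) * 2 ^ e) :=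
      Nat.mul_le_mul_left _ (four_mul_pow_le_succ_pow_mul_two_pow _ he)
    _ = _ := by ring

lemma fewnomialBound_le_fewnomialBound_zero {n m i : ℕ} (hi : i ≤ n - 1) (hm : n + 2 ≤ m) :
    fewnomialBound n m i ≤ fewnomialBound n m 0 := by
  induction i with
  | zero => exact le_rfl
  | succ i ih => exact (fewnomialBound_succ_le (by omega) (by omega)).trans (ih (by omega))

/-- Arithmetic inequality: for integers `i, n, m` with `m ≥ n + 2` and
`0 ≤ i ≤ n - 1`,
`2^i · n!/(n-i)! · (n-i+1)^(m-i-1) · 2^((m-i-1)(m-i-2)/2)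
  ≤ (1/2^i) · (n+1)^(m-1) · 2^((m-1)(m-2)/2)`. -/
theorem fewnomial_arithmetic_inequality (i n m : ℕ)
    (hm : n + 2 ≤ m) (hi : i ≤ n - 1) :
    (2 : ℝ) ^ i * ((n.factorial : ℝ) / ((n - i).factorial : ℝ)) *
        ((n : ℝ) - i + 1) ^ (m - i - 1) *
        (2 : ℝ) ^ ((m - i - 1) * (m - i - 2) / 2)
      ≤ (1 / (2 : ℝ) ^ i) * ((n : ℝ) + 1) ^ (m - 1) *
        (2 : ℝ) ^ ((m - 1) * (m - 2) / 2) := by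
  have hin : i ≤ n := by omega
  have hdesc : (n.factorial : ℝ) / (n - i).factorial = n.descFactorial i := by
    rw [Nat.descFactorial_eq_div hin,
      Nat.cast_div (Nat.factorial_dvd_factorial (Nat.sub_le n i)) (by positivity)]
  have hbase : (n : ℝ) - i + 1 = ((n - i + 1 : ℕ) : ℝ) := by push_cast [Nat.cast_sub hin]; ring
  have hexp (k : ℕ) : (k - 1) * (k - 2) / 2 = (k - 1).choose 2 := by
    rw [Nat.choose_two_right, show k - 2 = k - 1 - 1 by omega]
  have hlhs : (2 : ℝ) ^ i * ((n.factorial : ℝ) / ((n - i).factorial : ℝ)) *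
      ((n : ℝ) - i + 1) ^ (m - i - 1) * (2 : ℝ) ^ ((m - i - 1) * (m - i - 2) / 2)
      = fewnomialBound n m i / 2 ^ i := by
    rw [hdesc, hbase, hexp, fewnomialBound, show (4 : ℕ) = 2 * 2 from rfl, mul_pow]
    push_cast
    field_simp
  have hrhs : (1 / (2 : ℝ) ^ i) * ((n : ℝ) + 1) ^ (m - 1) * (2 : ℝ) ^ ((m - 1) * (m - 2) / 2)
      = fewnomialBound n m 0 / 2 ^ i := by
    rw [hexp m, fewnomialBound]
    push_cast [Nat.descFactorial_zero, Nat.sub_zero]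
    ring
  rw [hlhs, hrhs]
  gcongr
  exact_mod_cast fewnomialBound_le_fewnomialBound_zero hi hm
end
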